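/- arXiv:2409.03027 — 7 statements merged into one kernel-verified Lean document; each statement's English description precedes it below -/
import Mathlib

section
/- Let T>0. Assume a:[0,T]→ℝ is differentiable with a and a' essentially bounded and inf_{t∈[0,T]} a(t) = a₀ > 0, and q:[0,T]→ℝ is essentially bounded. Then there exists C>0, independent of β, t, F and V, such that for every β ≥ 1, every continuous F:[0,T]→ℂ², and every continuously differentiable V:[0,T]→ℂ² satisfying V'(t) = iβ A(t) V(t) + iβ⁻¹ Q(t) V(t) + F(t) on [0,T], one has |V(t)|² ≤ C( |V(0)|² + ∫₀ᵀ |F(τ)|² dτ ) for all t ∈ [0,T]. -/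
open Set MeasureTheory

open scoped InnerProductSpace Topology

/-!
The energy `E(t) = a(t)|V₁(t)|² + |V₂(t)|²` is equivalent to `|V(t)|²` because `a ≥ a₀ > 0`.
It is chosen so that the terms of size `β` cancel in `E'`: the contribution
`2aβ Re(iV₂ V̄₁)` of `a|V₁|²` is exactly offset by `2aβ Re(iV₁ V̄₂)` from `|V₂|²`. The remaining
terms involve only `a'`, `a`, `β⁻¹(q - a)` and `F`, giving `E' ≤ K E + |F|²` with `K`
independent of `β ≥ 1`, and Gronwall's inequality concludes.
-/

theorem hasDerivWithinAt_primitive_Ici {g : ℝ → ℝ} {a b x : ℝ} (hg : ContinuousOn g (Icc a b))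
    (hx : x ∈ Ico a b) : HasDerivWithinAt (fun y => ∫ z in a..y, g z) (g x) (Ici x) x := by
  have hmem : Icc a b ∈ 𝓝[Ioi x] x :=
    mem_nhdsWithin.2 ⟨Iio b, isOpen_Iio, hx.2, fun z hz => ⟨hx.1.trans hz.2.le, hz.1.le⟩⟩
  refine intervalIntegral.integral_hasDerivWithinAt_right ?_
    ⟨Icc a b, hmem, hg.aestronglyMeasurable measurableSet_Icc⟩
    ((hg x (Ico_subset_Icc_self hx)).mono_of_mem_nhdsWithin hmem)
  exact (hg.mono (Icc_subset_Icc_right hx.2.le)).intervalIntegrable_of_Icc hx.1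

open Real in
theorem le_exp_mul_add_integral_of_hasDerivWithinAt_le {f f' g : ℝ → ℝ} {K a b : ℝ}
    (hK : 0 ≤ K) (hf : ContinuousOn f (Icc a b))
    (hf' : ∀ x ∈ Ico a b, HasDerivWithinAt f (f' x) (Ici x) x)
    (hg : ContinuousOn g (Icc a b)) (hg₀ : ∀ x ∈ Icc a b, 0 ≤ g x)
    (bound : ∀ x ∈ Ico a b, f' x ≤ K * f x + g x) {x : ℝ} (hx : x ∈ Icc a b) :
    f x ≤ exp (K * (x - a)) * (f a + ∫ y in a..x, g y) := by
  set w : ℝ → ℝ := fun y => exp (-K * (y - a))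
  have hw : ∀ y, HasDerivAt w (-K * w y) y := fun y => by
    simpa [w, mul_comm] using ((hasDerivAt_id y).sub_const a).const_mul (-K) |>.exp
  have hw_le_one : ∀ y ∈ Ico a b, w y ≤ 1 := fun y hy =>
    exp_le_one_iff.2 (by nlinarith [hy.1])
  have hprim : ContinuousOn (fun y => ∫ z in a..y, g z) (Icc a b) := by
    rw [← uIcc_of_le (hx.1.trans hx.2)] at hg ⊢
    exact intervalIntegral.continuousOn_primitive_interval hg.integrableOn_uIcc
  -- `w f` grows no faster than the primitive of `g`, since `(w f)' = w (f' - K f) ≤ w g ≤ g`.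
  have key := image_le_of_deriv_right_le_deriv_boundary
    (f := fun y => w y * f y) (B := fun y => f a + ∫ z in a..y, g z)
    ((continuous_exp.comp (by fun_prop)).continuousOn.mul hf)
    (fun y hy => (hw y).hasDerivWithinAt.mul (hf' y hy)) (by simp [w])
    (continuousOn_const.add hprim)
    (fun y hy => (hasDerivWithinAt_primitive_Ici hg hy).const_add _)
    (fun y hy => by
      have := bound y hy
      have := hg₀ y (Ico_subset_Icc_self hy)
      have := hw_le_one y hy
      have : 0 < w y := exp_pos _
      nlinarith) hx
  calc f x = exp (K * (x - a)) * (w x * f x) := by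
        rw [← mul_assoc, ← exp_add]; simp
    _ ≤ _ := mul_le_mul_of_nonneg_left key (exp_pos _).le

theorem two_mul_inner_le_norm_sq_add_norm_sq {E : Type*} [NormedAddCommGroup E]
    [InnerProductSpace ℝ E] (x y : E) : 2 * ⟪x, y⟫_ℝ ≤ ‖x‖ ^ 2 + ‖y‖ ^ 2 := by
  nlinarith [norm_sub_sq_real x y, sq_nonneg ‖x - y‖]

noncomputable def energy (a : ℝ → ℝ) (V₁ V₂ : ℝ → ℂ) (t : ℝ) : ℝ :=
  a t * ‖V₁ t‖ ^ 2 + ‖V₂ t‖ ^ 2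

theorem mul_norm_sq_add_le_energy {a : ℝ → ℝ} {V₁ V₂ : ℝ → ℂ} {c t : ℝ} (hc : c ≤ a t)
    (hc₁ : c ≤ 1) : c * (‖V₁ t‖ ^ 2 + ‖V₂ t‖ ^ 2) ≤ energy a V₁ V₂ t := by
  unfold energy
  nlinarith [sq_nonneg ‖V₁ t‖, sq_nonneg ‖V₂ t‖]

theorem energy_le_mul_norm_sq_add {a : ℝ → ℝ} {V₁ V₂ : ℝ → ℂ} {M t : ℝ} (hM : a t ≤ M)
    (hM₁ : 1 ≤ M) : energy a V₁ V₂ t ≤ M * (‖V₁ t‖ ^ 2 + ‖V₂ t‖ ^ 2) := by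
  unfold energy
  nlinarith [sq_nonneg ‖V₁ t‖, sq_nonneg ‖V₂ t‖]

/-- The left side is `E'` written out by the product rule. -/
theorem energy_rate_le {a a' s β Ma Ma' Ms : ℝ} {v₁ v₂ f₁ f₂ : ℂ}
    (ha : |a| ≤ Ma) (ha' : |a'| ≤ Ma') (hs : |s| ≤ Ms) :
    a' * ‖v₁‖ ^ 2 + a * (2 * ⟪v₁, Complex.I * β * v₂ + f₁⟫_ℝ)
        + 2 * ⟪v₂, Complex.I * β * a * v₁ + Complex.I * s * v₁ + f₂⟫_ℝ
      ≤ (Ma' + Ma ^ 2 + Ms ^ 2 + 1) * (‖v₁‖ ^ 2 + ‖v₂‖ ^ 2) + (‖f₁‖ ^ 2 + ‖f₂‖ ^ 2) := by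
  have hcancel : a' * ‖v₁‖ ^ 2 + a * (2 * ⟪v₁, Complex.I * β * v₂ + f₁⟫_ℝ)
        + 2 * ⟪v₂, Complex.I * β * a * v₁ + Complex.I * s * v₁ + f₂⟫_ℝ
      = a' * ‖v₁‖ ^ 2 + 2 * ⟪(a : ℂ) * v₁, f₁⟫_ℝ + 2 * ⟪(s : ℂ) * v₂, Complex.I * v₁⟫_ℝ
        + 2 * ⟪v₂, f₂⟫_ℝ := by
    simp only [Complex.inner, map_mul, Complex.conj_ofReal,
      Complex.mul_re, Complex.mul_im, Complex.add_re, Complex.add_im, Complex.I_re, Complex.I_im,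
      Complex.ofReal_re, Complex.ofReal_im, Complex.conj_re, Complex.conj_im]
    ring
  have h₁ := two_mul_inner_le_norm_sq_add_norm_sq ((a : ℂ) * v₁) f₁
  have h₂ := two_mul_inner_le_norm_sq_add_norm_sq ((s : ℂ) * v₂) (Complex.I * v₁)
  have h₃ := two_mul_inner_le_norm_sq_add_norm_sq v₂ f₂
  simp only [norm_mul, Complex.norm_real, Complex.norm_I, one_mul, Real.norm_eq_abs, mul_pow,
    sq_abs] at h₁ h₂
  have hMa' : 0 ≤ Ma' := (abs_nonneg _).trans ha'
  have ha2 : a ^ 2 ≤ Ma ^ 2 := sq_le_sq' (abs_le.1 ha).1 (abs_le.1 ha).2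
  have hs2 : s ^ 2 ≤ Ms ^ 2 := sq_le_sq' (abs_le.1 hs).1 (abs_le.1 hs).2
  rw [hcancel]
  nlinarith [le_abs_self a', sq_nonneg ‖v₁‖, sq_nonneg ‖v₂‖, sq_nonneg Ma]

theorem exists_hasDerivAt_energy_le {a a' : ℝ → ℝ} {V₁ V₂ F₁ F₂ : ℝ → ℂ}
    {s β t Ma Ma' Ms : ℝ} (ha : HasDerivAt a (a' t) t)
    (hV₁ : HasDerivAt V₁ (Complex.I * β * V₂ t + F₁ t) t)
    (hV₂ : HasDerivAt V₂ (Complex.I * β * a t * V₁ t + Complex.I * s * V₁ t + F₂ t) t)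
    (ha_bd : |a t| ≤ Ma) (ha'_bd : |a' t| ≤ Ma') (hs : |s| ≤ Ms) :
    ∃ D, HasDerivAt (energy a V₁ V₂) D t ∧
      D ≤ (Ma' + Ma ^ 2 + Ms ^ 2 + 1) * (‖V₁ t‖ ^ 2 + ‖V₂ t‖ ^ 2) + (‖F₁ t‖ ^ 2 + ‖F₂ t‖ ^ 2) :=
  ⟨_, (ha.mul hV₁.norm_sq).add hV₂.norm_sq, energy_rate_le ha_bd ha'_bd hs⟩

theorem energy_le_exp_mul_add_integral {T c Ma Ma' Ms β : ℝ} {a a' s : ℝ → ℝ}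
    {V₁ V₂ F₁ F₂ : ℝ → ℂ} (hc : 0 < c) (hc₁ : c ≤ 1) (ha_low : ∀ t ∈ Icc (0:ℝ) T, c ≤ a t)
    (ha_deriv : ∀ t ∈ Icc (0:ℝ) T, HasDerivAt a (a' t) t)
    (ha_bd : ∀ t ∈ Icc (0:ℝ) T, |a t| ≤ Ma) (ha'_bd : ∀ t ∈ Icc (0:ℝ) T, |a' t| ≤ Ma')
    (hs_bd : ∀ t ∈ Icc (0:ℝ) T, |s t| ≤ Ms)
    (hF₁ : ContinuousOn F₁ (Icc 0 T)) (hF₂ : ContinuousOn F₂ (Icc 0 T))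
    (hV₁ : ∀ t ∈ Icc (0:ℝ) T, HasDerivAt V₁ (Complex.I * β * V₂ t + F₁ t) t)
    (hV₂ : ∀ t ∈ Icc (0:ℝ) T,
      HasDerivAt V₂ (Complex.I * β * a t * V₁ t + Complex.I * s t * V₁ t + F₂ t) t)
    {t : ℝ} (ht : t ∈ Icc 0 T) :
    energy a V₁ V₂ t ≤ Real.exp ((Ma' + Ma ^ 2 + Ms ^ 2 + 1) / c * t)
      * (energy a V₁ V₂ 0 + ∫ τ in (0:ℝ)..t, (‖F₁ τ‖ ^ 2 + ‖F₂ τ‖ ^ 2)) := by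
  choose! D hD hD_le using fun τ (hτ : τ ∈ Icc (0:ℝ) T) =>
    exists_hasDerivAt_energy_le (ha_deriv τ hτ) (hV₁ τ hτ) (hV₂ τ hτ) (ha_bd τ hτ)
      (ha'_bd τ hτ) (hs_bd τ hτ)
  have hK : 0 ≤ (Ma' + Ma ^ 2 + Ms ^ 2 + 1) / c := by
    have hMa' : 0 ≤ Ma' := (abs_nonneg _).trans (ha'_bd 0 ⟨le_rfl, ht.1.trans ht.2⟩)
    positivity
  have hD_le' : ∀ τ ∈ Ico (0:ℝ) T,
      D τ ≤ (Ma' + Ma ^ 2 + Ms ^ 2 + 1) / c * energy a V₁ V₂ τ + (‖F₁ τ‖ ^ 2 + ‖F₂ τ‖ ^ 2) :=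
    fun τ hτ => by
    have hτ := Ico_subset_Icc_self hτ
    have := mul_le_mul_of_nonneg_left
      (mul_norm_sq_add_le_energy (V₁ := V₁) (V₂ := V₂) (ha_low τ hτ) hc₁) hK
    rw [← mul_assoc, div_mul_cancel₀ _ hc.ne'] at this
    linarith [hD_le τ hτ]
  simpa using le_exp_mul_add_integral_of_hasDerivWithinAt_le
    (g := fun τ => ‖F₁ τ‖ ^ 2 + ‖F₂ τ‖ ^ 2) hK
    (fun τ hτ => (hD τ hτ).continuousAt.continuousWithinAt)
    (fun τ hτ => (hD τ (Ico_subset_Icc_self hτ)).hasDerivWithinAt)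
    ((hF₁.norm.pow 2).add (hF₂.norm.pow 2)) (fun _ _ => by positivity) hD_le' ht

theorem abs_inv_mul_le_abs {β : ℝ} (hβ : 1 ≤ β) (x : ℝ) : |β⁻¹ * x| ≤ |x| := by
  rw [abs_mul, abs_inv, abs_of_pos (one_pos.trans_le hβ)]
  exact mul_le_of_le_one_left (abs_nonneg _) (inv_le_one_of_one_le₀ hβ)

theorem first_order_system_energy_estimate_general
    (T a₀ Ma Ma' Mq : ℝ) (ha₀ : 0 < a₀)
    (a a' q : ℝ → ℝ)
    (ha_deriv : ∀ t ∈ Icc (0:ℝ) T, HasDerivAt a (a' t) t)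
    (ha_bd : ∀ t ∈ Icc (0:ℝ) T, |a t| ≤ Ma)
    (ha'_bd : ∀ t ∈ Icc (0:ℝ) T, |a' t| ≤ Ma')
    (hq_bd : ∀ t ∈ Icc (0:ℝ) T, |q t| ≤ Mq)
    (ha_low : ∀ t ∈ Icc (0:ℝ) T, a₀ ≤ a t) :
    ∃ C > 0, ∀ β : ℝ, 1 ≤ β → ∀ F₁ F₂ V₁ V₂ : ℝ → ℂ,
      ContinuousOn F₁ (Icc (0:ℝ) T) → ContinuousOn F₂ (Icc (0:ℝ) T) →
      (∀ t ∈ Icc (0:ℝ) T,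
        HasDerivAt V₁ (Complex.I * (β : ℂ) * V₂ t + F₁ t) t) →
      (∀ t ∈ Icc (0:ℝ) T,
        HasDerivAt V₂ (Complex.I * (β : ℂ) * (a t : ℂ) * V₁ t
          + Complex.I * (β : ℂ)⁻¹ * ((q t : ℂ) - (a t : ℂ)) * V₁ t + F₂ t) t) →
      ∀ t ∈ Icc (0:ℝ) T,
        ‖V₁ t‖ ^ 2 + ‖V₂ t‖ ^ 2 ≤
          C * (‖V₁ 0‖ ^ 2 + ‖V₂ 0‖ ^ 2 + ∫ τ in (0:ℝ)..T, (‖F₁ τ‖ ^ 2 + ‖F₂ τ‖ ^ 2)) := by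
  set c := min a₀ 1
  have hc : 0 < c := lt_min ha₀ one_pos
  set K := (Ma' + Ma ^ 2 + (Mq + Ma) ^ 2 + 1) / c
  refine ⟨Real.exp (K * T) * max Ma 1 / c, by positivity, ?_⟩
  intro β hβ F₁ F₂ V₁ V₂ hF₁ hF₂ hV₁ hV₂ t ht
  have h0 : (0:ℝ) ∈ Icc 0 T := ⟨le_rfl, ht.1.trans ht.2⟩
  have hc_le : ∀ τ ∈ Icc (0:ℝ) T, c ≤ a τ := fun τ hτ => (min_le_left _ _).trans (ha_low τ hτ)
  have hs_bd : ∀ τ ∈ Icc (0:ℝ) T, |β⁻¹ * (q τ - a τ)| ≤ Mq + Ma := fun τ hτ =>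
    (abs_inv_mul_le_abs hβ _).trans
      ((abs_sub _ _).trans (add_le_add (hq_bd τ hτ) (ha_bd τ hτ)))
  have hE := energy_le_exp_mul_add_integral hc (min_le_right _ _) hc_le ha_deriv ha_bd ha'_bd
    hs_bd hF₁ hF₂ hV₁ (fun τ hτ => by convert hV₂ τ hτ using 3; push_cast; ring) ht
  have hE₀ : energy a V₁ V₂ 0 ≤ max Ma 1 * (‖V₁ 0‖ ^ 2 + ‖V₂ 0‖ ^ 2) :=
    energy_le_mul_norm_sq_add (((le_abs_self _).trans (ha_bd 0 h0)).trans (le_max_left _ _))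
      (le_max_right _ _)
  have hE₀_nonneg : 0 ≤ energy a V₁ V₂ 0 :=
    (mul_nonneg hc.le (by positivity)).trans
      (mul_norm_sq_add_le_energy (hc_le 0 h0) (min_le_right _ _))
  set G : ℝ → ℝ := fun τ => ‖F₁ τ‖ ^ 2 + ‖F₂ τ‖ ^ 2
  have hGt : 0 ≤ ∫ τ in (0:ℝ)..t, G τ :=
    intervalIntegral.integral_nonneg ht.1 fun _ _ => by positivity
  have hGT : ∫ τ in (0:ℝ)..t, G τ ≤ ∫ τ in (0:ℝ)..T, G τ :=
    intervalIntegral.integral_mono_interval le_rfl ht.1 ht.2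
      (Filter.Eventually.of_forall fun _ => by positivity)
      (((hF₁.norm.pow 2).add (hF₂.norm.pow 2)).intervalIntegrable_of_Icc h0.2)
  rw [div_mul_eq_mul_div, le_div_iff₀ hc, mul_comm]
  calc c * (‖V₁ t‖ ^ 2 + ‖V₂ t‖ ^ 2) ≤ energy a V₁ V₂ t :=
        mul_norm_sq_add_le_energy (hc_le t ht) (min_le_right _ _)
    _ ≤ Real.exp (K * t) * (energy a V₁ V₂ 0 + ∫ τ in (0:ℝ)..t, G τ) := hE
    _ ≤ Real.exp (K * T) * (max Ma 1 * (‖V₁ 0‖ ^ 2 + ‖V₂ 0‖ ^ 2) + ∫ τ in (0:ℝ)..T, G τ) := by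
        have hMa' : 0 ≤ Ma' := (abs_nonneg _).trans (ha'_bd 0 h0)
        gcongr
        exact ht.2
    _ ≤ Real.exp (K * T) * max Ma 1 * (‖V₁ 0‖ ^ 2 + ‖V₂ 0‖ ^ 2 + ∫ τ in (0:ℝ)..T, G τ) := by
        rw [mul_assoc]
        gcongr
        nlinarith [le_max_right Ma 1, hGt.trans hGT]

/-- Energy estimate for the first-order system `V' = iβ A V + iβ⁻¹ Q V + F`,
where `A(t) = [[0,1],[a(t),0]]` and `Q(t) = [[0,0],[q(t)-a(t),0]]`, written componentwise. -/
theorem first_order_system_energy_estimate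
    (T a₀ Ma Ma' Mq : ℝ) (hT : 0 < T) (ha₀ : 0 < a₀)
    (a a' q : ℝ → ℝ)
    (ha_deriv : ∀ t ∈ Icc (0:ℝ) T, HasDerivAt a (a' t) t)
    (ha_bd : ∀ t ∈ Icc (0:ℝ) T, |a t| ≤ Ma)
    (ha'_bd : ∀ t ∈ Icc (0:ℝ) T, |a' t| ≤ Ma')
    (hq_bd : ∀ t ∈ Icc (0:ℝ) T, |q t| ≤ Mq)
    (ha_low : ∀ t ∈ Icc (0:ℝ) T, a₀ ≤ a t) :
    ∃ C > 0, ∀ β : ℝ, 1 ≤ β → ∀ F₁ F₂ V₁ V₂ : ℝ → ℂ,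
      ContinuousOn F₁ (Icc (0:ℝ) T) → ContinuousOn F₂ (Icc (0:ℝ) T) →
      (∀ t ∈ Icc (0:ℝ) T,
        HasDerivAt V₁ (Complex.I * (β : ℂ) * V₂ t + F₁ t) t) →
      (∀ t ∈ Icc (0:ℝ) T,
        HasDerivAt V₂ (Complex.I * (β : ℂ) * (a t : ℂ) * V₁ t
          + Complex.I * (β : ℂ)⁻¹ * ((q t : ℂ) - (a t : ℂ)) * V₁ t + F₂ t) t) →
      ∀ t ∈ Icc (0:ℝ) T,
        ‖V₁ t‖ ^ 2 + ‖V₂ t‖ ^ 2 ≤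
          C * (‖V₁ 0‖ ^ 2 + ‖V₂ 0‖ ^ 2 + ∫ τ in (0:ℝ)..T, (‖F₁ τ‖ ^ 2 + ‖F₂ τ‖ ^ 2)) :=
  first_order_system_energy_estimate_general T a₀ Ma Ma' Mq ha₀ a a' q ha_deriv ha_bd ha'_bd hq_bd
    ha_low
end

section
/- Let T>0, let a:[0,T]→ℝ be differentiable with a and a' essentially bounded, and let q:[0,T]→ℝ be essentially bounded. Let β ≥ 1, let F:[0,T]→ℂ² be continuous, and let V:[0,T]→ℂ² be continuously differentiable with V'(t) = iβ A(t) V(t) + iβ⁻¹ Q(t) V(t) + F(t) on [0,T]. Define the energy E(t) = ⟨S(t)V(t), V(t)⟩ = a(t)|V₁(t)|² + |V₂(t)|². Then for almost every t ∈ [0,T], E'(t) ≤ (1 + ‖a'‖_{L^∞} + 2‖a‖_{L^∞} + ‖q‖_{L^∞}) |V(t)|² + (1 + ‖a‖_{L^∞}) |F(t)|². -/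
open Set MeasureTheory Complex
open scoped InnerProductSpace

/-!
Differentiating `E = a|V₁|² + |V₂|²` along the system, the terms of order `β` cancel because
`S A = Aᵀ S` (`energy_rate_eq`). What remains is `a'|V₁|²`, the forcing terms `2a⟪V₁, F₁⟫` and
`2⟪V₂, F₂⟫`, and the coupling `2β⁻¹(q - a)⟪V₂, iV₁⟫`; each is bounded by
`2|⟪x, y⟫| ≤ |x|² + |y|²`, using `β⁻¹ ≤ 1` for the last one.
-/

theorem mul_two_inner_le_mul_norm_sq_add {E : Type*} [NormedAddCommGroup E]
    [InnerProductSpace ℝ E] {c M : ℝ} (hc : |c| ≤ M) (x y : E) :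
    c * (2 * ⟪x, y⟫_ℝ) ≤ M * (‖x‖ ^ 2 + ‖y‖ ^ 2) := by
  have hM : 0 ≤ M := (abs_nonneg c).trans hc
  calc c * (2 * ⟪x, y⟫_ℝ) ≤ |c| * (2 * |⟪x, y⟫_ℝ|) :=
        (le_abs_self _).trans_eq (by simp only [abs_mul, abs_two])
    _ ≤ M * (2 * (‖x‖ * ‖y‖)) := by gcongr; exact abs_real_inner_le_norm x y
    _ ≤ M * (‖x‖ ^ 2 + ‖y‖ ^ 2) := by
        gcongr; nlinarith [two_mul_le_add_sq ‖x‖ ‖y‖]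

theorem energy_rate_eq (α α' β Q : ℝ) (v₁ v₂ f₁ f₂ : ℂ) :
    α' * ‖v₁‖ ^ 2 + α * (2 * ⟪v₁, I * β * v₂ + f₁⟫_ℝ)
        + 2 * ⟪v₂, I * β * α * v₁ + I * (β : ℂ)⁻¹ * ((Q : ℂ) - α) * v₁ + f₂⟫_ℝ
      = α' * ‖v₁‖ ^ 2 + α * (2 * ⟪v₁, f₁⟫_ℝ) + 2 * ⟪v₂, f₂⟫_ℝ
        + β⁻¹ * (Q - α) * (2 * ⟪v₂, I * v₁⟫_ℝ) := by
  simp only [Complex.inner, ← ofReal_inv, add_re, add_im, sub_re, sub_im, mul_re, mul_im,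
    conj_re, conj_im, I_re, I_im, ofReal_re, ofReal_im]
  ring

theorem energy_rate_le_s2 {α α' β Q Ma Ma' Mq : ℝ} (hα : |α| ≤ Ma) (hα' : |α'| ≤ Ma')
    (hQ : |Q| ≤ Mq) (hβ : 1 ≤ β) (v₁ v₂ f₁ f₂ : ℂ) :
    α' * ‖v₁‖ ^ 2 + α * (2 * ⟪v₁, I * β * v₂ + f₁⟫_ℝ)
        + 2 * ⟪v₂, I * β * α * v₁ + I * (β : ℂ)⁻¹ * ((Q : ℂ) - α) * v₁ + f₂⟫_ℝ
      ≤ (1 + Ma' + 2 * Ma + Mq) * (‖v₁‖ ^ 2 + ‖v₂‖ ^ 2)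
        + (1 + Ma) * (‖f₁‖ ^ 2 + ‖f₂‖ ^ 2) := by
  have hcoupling : |β⁻¹ * (Q - α)| ≤ Mq + Ma := by
    rw [abs_mul, abs_of_pos (by positivity)]
    calc β⁻¹ * |Q - α| ≤ 1 * (|Q| + |α|) :=
          mul_le_mul (inv_le_one_of_one_le₀ hβ) (abs_sub _ _) (abs_nonneg _) zero_le_one
      _ ≤ Mq + Ma := by linarith
  have hMa : 0 ≤ Ma := (abs_nonneg α).trans hα
  have hMa' : 0 ≤ Ma' := (abs_nonneg α').trans hα'
  have hdiss : α' * ‖v₁‖ ^ 2 ≤ Ma' * ‖v₁‖ ^ 2 := by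
    gcongr; exact (le_abs_self α').trans hα'
  have hf₁ := mul_two_inner_le_mul_norm_sq_add hα v₁ f₁
  have hf₂ := mul_two_inner_le_mul_norm_sq_add (abs_one.le : |(1 : ℝ)| ≤ 1) v₂ f₂
  have hv := mul_two_inner_le_mul_norm_sq_add hcoupling v₂ (I * v₁)
  rw [norm_mul, norm_I, one_mul] at hv
  rw [energy_rate_eq]
  linarith [mul_nonneg hMa (sq_nonneg ‖v₂‖), mul_nonneg hMa (sq_nonneg ‖f₂‖),
    mul_nonneg hMa' (sq_nonneg ‖v₂‖), sq_nonneg ‖v₁‖, sq_nonneg ‖f₁‖]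

theorem energy_derivative_estimate_general
    (T Ma Ma' Mq : ℝ)
    (a a' q : ℝ → ℝ)
    (ha_deriv : ∀ t ∈ Icc (0:ℝ) T, HasDerivAt a (a' t) t)
    (ha_bd : ∀ t ∈ Icc (0:ℝ) T, |a t| ≤ Ma)
    (ha'_bd : ∀ t ∈ Icc (0:ℝ) T, |a' t| ≤ Ma')
    (hq_bd : ∀ t ∈ Icc (0:ℝ) T, |q t| ≤ Mq)
    (β : ℝ) (hβ : 1 ≤ β)
    (F₁ F₂ V₁ V₂ : ℝ → ℂ)
    (hV₁ : ∀ t ∈ Icc (0:ℝ) T,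
      HasDerivAt V₁ (Complex.I * (β : ℂ) * V₂ t + F₁ t) t)
    (hV₂ : ∀ t ∈ Icc (0:ℝ) T,
      HasDerivAt V₂ (Complex.I * (β : ℂ) * (a t : ℂ) * V₁ t
        + Complex.I * (β : ℂ)⁻¹ * ((q t : ℂ) - (a t : ℂ)) * V₁ t + F₂ t) t) :
    ∀ᵐ t ∂(volume.restrict (Icc (0:ℝ) T)),
      deriv (fun τ => a τ * ‖V₁ τ‖ ^ 2 + ‖V₂ τ‖ ^ 2) t ≤
        (1 + Ma' + 2 * Ma + Mq) * (‖V₁ t‖ ^ 2 + ‖V₂ t‖ ^ 2)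
          + (1 + Ma) * (‖F₁ t‖ ^ 2 + ‖F₂ t‖ ^ 2) := by
  refine (ae_restrict_iff' measurableSet_Icc).2 (ae_of_all _ fun t ht => ?_)
  have hE : HasDerivAt (fun τ => a τ * ‖V₁ τ‖ ^ 2 + ‖V₂ τ‖ ^ 2) _ t :=
    ((ha_deriv t ht).mul (hV₁ t ht).norm_sq).add (hV₂ t ht).norm_sq
  rw [hE.deriv]
  exact energy_rate_le_s2 (ha_bd t ht) (ha'_bd t ht) (hq_bd t ht) hβ _ _ _ _

/-- Derivative estimate for the energy `E(t) = a(t)|V₁(t)|² + |V₂(t)|²` of the first-order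
system `V' = iβ A V + iβ⁻¹ Q V + F` (written componentwise). -/
theorem energy_derivative_estimate
    (T Ma Ma' Mq : ℝ) (hT : 0 < T)
    (a a' q : ℝ → ℝ)
    (ha_deriv : ∀ t ∈ Icc (0:ℝ) T, HasDerivAt a (a' t) t)
    (ha_bd : ∀ t ∈ Icc (0:ℝ) T, |a t| ≤ Ma)
    (ha'_bd : ∀ t ∈ Icc (0:ℝ) T, |a' t| ≤ Ma')
    (hq_bd : ∀ t ∈ Icc (0:ℝ) T, |q t| ≤ Mq)
    (β : ℝ) (hβ : 1 ≤ β)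
    (F₁ F₂ V₁ V₂ : ℝ → ℂ)
    (hF₁ : ContinuousOn F₁ (Icc (0:ℝ) T)) (hF₂ : ContinuousOn F₂ (Icc (0:ℝ) T))
    (hV₁ : ∀ t ∈ Icc (0:ℝ) T,
      HasDerivAt V₁ (Complex.I * (β : ℂ) * V₂ t + F₁ t) t)
    (hV₂ : ∀ t ∈ Icc (0:ℝ) T,
      HasDerivAt V₂ (Complex.I * (β : ℂ) * (a t : ℂ) * V₁ t
        + Complex.I * (β : ℂ)⁻¹ * ((q t : ℂ) - (a t : ℂ)) * V₁ t + F₂ t) t) :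
    ∀ᵐ t ∂(volume.restrict (Icc (0:ℝ) T)),
      deriv (fun τ => a τ * ‖V₁ τ‖ ^ 2 + ‖V₂ τ‖ ^ 2) t ≤
        (1 + Ma' + 2 * Ma + Mq) * (‖V₁ t‖ ^ 2 + ‖V₂ t‖ ^ 2)
          + (1 + Ma) * (‖F₁ t‖ ^ 2 + ‖F₂ t‖ ^ 2) :=
  energy_derivative_estimate_general T Ma Ma' Mq a a' q ha_deriv ha_bd ha'_bd hq_bd β hβ F₁ F₂ V₁ V₂
    hV₁ hV₂
end

section
/- Let T>0, 0<α<1, a₀>0, and let a:ℝ→ℝ be Hölder continuous of order α with a(t) ≥ a₀ for all t. Let ψ be a mollifier supported in [0,T], λ^ε = √a * ψ_ε, and H(t) = [[1,1],[−λ^ε(t), λ^ε(t)]]. Then H(t) is invertible and there exists C > 0, depending only on α, a₀, ‖a‖_{C^α}, T and ψ, such that the operator norm satisfies ‖H(t)⁻¹ (d/dt)H(t)‖ ≤ C ε^{α−1} for all t ∈ [0,T] and all ε ∈ (0,1]. -/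
/-! Since `ψ` is a probability density and `a ≥ a₀`, `λ^ε ≥ √a₀`. Writing `λ^ε` as the
convolution `√a ⋆ ψ_ε` puts the derivative on `ψ_ε`, at the cost of a factor `ε⁻¹`; because
`∫ ψ' = 0` one may subtract `√a(t)` under the integral, and the Hölder continuity of `√a`
(inherited from `a`, as `√` is Lipschitz on `[a₀, ∞)`) wins back `ε^α`. Finally
`H⁻¹ H' = (λ'/2λ) [[1,-1],[-1,1]]`. -/

open Set MeasureTheory Matrix

/-- The regularisation `λ^ε = √a * ψ_ε` of the square root of the propagation speed:
`λ^ε(t) = ∫ √(a(t - εx)) ψ(x) dx`. -/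
noncomputable def lamEps (a ψ : ℝ → ℝ) (ε t : ℝ) : ℝ :=
  ∫ x, Real.sqrt (a (t - ε * x)) * ψ x

/-- The matrix `H(t) = [[1,1],[-λ^ε(t),λ^ε(t)]]`. -/
noncomputable def Hmat (a ψ : ℝ → ℝ) (ε t : ℝ) : Matrix (Fin 2) (Fin 2) ℝ :=
  !![1, 1; -lamEps a ψ ε t, lamEps a ψ ε t]

/-- The entrywise time derivative `(d/dt)H(t) = [[0,0],[-(λ^ε)'(t),(λ^ε)'(t)]]`. -/
noncomputable def HmatDeriv (a ψ : ℝ → ℝ) (ε t : ℝ) : Matrix (Fin 2) (Fin 2) ℝ :=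
  !![0, 0; -deriv (lamEps a ψ ε) t, deriv (lamEps a ψ ε) t]

open Filter Topology
open scoped Convolution

lemma continuous_of_abs_sub_le_mul_rpow {f : ℝ → ℝ} {M α : ℝ} (hα : 0 < α)
    (hf : ∀ t s, |f t - f s| ≤ M * |t - s| ^ α) : Continuous f := by
  refine continuous_iff_continuousAt.2 fun t => ?_
  have hbound : Tendsto (fun s => M * |s - t| ^ α) (𝓝 t) (𝓝 0) := by
    have hcont : Continuous fun s => M * |s - t| ^ α :=
      continuous_const.mul
        ((continuous_id.sub continuous_const).abs.rpow_const fun _ => Or.inr hα.le)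
    simpa [Real.zero_rpow hα.ne'] using hcont.tendsto t
  exact tendsto_iff_norm_sub_tendsto_zero.2
    (squeeze_zero (fun _ => norm_nonneg _) (fun s => hf s t) hbound)

lemma abs_sqrt_sub_sqrt_le {c u v : ℝ} (hc : 0 < c) (hu : c ≤ u) (hv : c ≤ v) :
    |√u - √v| ≤ |u - v| / (2 * √c) := by
  have hcu : √c ≤ √u := Real.sqrt_le_sqrt hu
  have hcv : √c ≤ √v := Real.sqrt_le_sqrt hv
  have hsc : 0 < √c := Real.sqrt_pos.2 hc
  have hprod : |√u - √v| * (√u + √v) = |u - v| := by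
    rw [← abs_of_pos (by linarith : 0 < √u + √v), ← abs_mul]
    congr 1
    linear_combination Real.sq_sqrt (hc.le.trans hu) - Real.sq_sqrt (hc.le.trans hv)
  rw [le_div_iff₀ (by positivity), ← hprod]
  exact mul_le_mul_of_nonneg_left (by linarith) (abs_nonneg _)

lemma integral_comp_sub_mul_mul_eq_convolution (g θ : ℝ → ℝ) {ε : ℝ} (hε : 0 < ε) (t : ℝ) :
    ∫ x, g (t - ε * x) * θ x
      = (g ⋆[ContinuousLinearMap.mul ℝ ℝ] fun s => ε⁻¹ * θ (ε⁻¹ * s)) t := by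
  rw [convolution_mul_swap]
  have := Measure.integral_comp_mul_left (fun s => g (t - s) * θ (ε⁻¹ * s)) ε
  simp only [inv_mul_cancel_left₀ hε.ne', abs_of_pos (inv_pos.2 hε), smul_eq_mul] at this
  rw [this, ← integral_const_mul]
  congr 1 with s
  ring

lemma hasDerivAt_integral_comp_sub_mul_mul {g ψ : ℝ → ℝ} (hg : Continuous g)
    (hψ : ContDiff ℝ 1 ψ) (hψc : HasCompactSupport ψ) {ε : ℝ} (hε : 0 < ε) (t : ℝ) :
    HasDerivAt (fun t => ∫ x, g (t - ε * x) * ψ x)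
      (ε⁻¹ * ∫ x, g (t - ε * x) * deriv ψ x) t := by
  set φ : ℝ → ℝ := fun s => ε⁻¹ * ψ (ε⁻¹ * s)
  have hφ : ContDiff ℝ 1 φ := contDiff_const.mul (hψ.comp (contDiff_const.mul contDiff_id))
  have hφc : HasCompactSupport φ :=
    (hψc.comp_smul (inv_ne_zero hε.ne')).mul_left
  have hφ' : deriv φ = fun s => ε⁻¹ * (ε⁻¹ * deriv ψ (ε⁻¹ * s)) := by
    funext s
    simp only [φ, deriv_const_mul_field', deriv_comp_mul_left, smul_eq_mul]
  have hconv : (fun t => ∫ x, g (t - ε * x) * ψ x)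
      = g ⋆[ContinuousLinearMap.mul ℝ ℝ] φ :=
    funext (integral_comp_sub_mul_mul_eq_convolution g ψ hε)
  rw [hconv]
  refine (hφc.hasDerivAt_convolution_right _ hg.locallyIntegrable hφ t).congr_deriv ?_
  rw [hφ', ← integral_comp_sub_mul_mul_eq_convolution g (fun x => ε⁻¹ * deriv ψ x) hε,
    ← integral_const_mul]
  congr 1 with x
  ring

lemma integral_deriv_eq_zero_of_hasCompactSupport {ψ : ℝ → ℝ} (hψ : ContDiff ℝ 1 ψ)
    (hψc : HasCompactSupport ψ) : ∫ x, deriv ψ x = 0 :=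
  integral_eq_zero_of_hasDerivAt_of_integrable
    (fun x => (hψ.differentiable one_ne_zero x).hasDerivAt)
    ((hψ.continuous_deriv le_rfl).integrable_of_hasCompactSupport hψc.deriv)
    (hψ.continuous.integrable_of_hasCompactSupport hψc)

lemma le_integral_mul_of_le {g ψ : ℝ → ℝ} {c : ℝ} (hg : ∀ x, c ≤ g x) (hψ : ∀ x, 0 ≤ ψ x)
    (hψi : Integrable ψ) (hgψ : Integrable fun x => g x * ψ x) (hψ1 : ∫ x, ψ x = 1) :
    c ≤ ∫ x, g x * ψ x :=
  calc c = ∫ x, c * ψ x := by rw [integral_const_mul, hψ1, mul_one]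
    _ ≤ ∫ x, g x * ψ x :=
      integral_mono (hψi.const_mul c) hgψ fun x => mul_le_mul_of_nonneg_right (hg x) (hψ x)

lemma sqrt_le_lamEps {a ψ : ℝ → ℝ} {a₀ : ℝ} (ha : Continuous a) (ha_low : ∀ t, a₀ ≤ a t)
    (hψ : Continuous ψ) (hψc : HasCompactSupport ψ) (hψ_nonneg : ∀ x, 0 ≤ ψ x)
    (hψ_int : ∫ x, ψ x = 1) (ε t : ℝ) : √a₀ ≤ lamEps a ψ ε t :=
  le_integral_mul_of_le (fun x => Real.sqrt_le_sqrt (ha_low _)) hψ_nonneg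
    (hψ.integrable_of_hasCompactSupport hψc)
    ((by fun_prop : Continuous fun x => √(a (t - ε * x)) * ψ x).integrable_of_hasCompactSupport
      hψc.mul_left) hψ_int

lemma abs_deriv_integral_comp_sub_mul_mul_le {g ψ : ℝ → ℝ} {L α T ε : ℝ} (hα : 0 < α)
    (hg : ∀ t s, |g t - g s| ≤ L * |t - s| ^ α) (hψ : ContDiff ℝ 1 ψ)
    (hψ_supp : tsupport ψ ⊆ Icc 0 T) (hε : 0 < ε) (t : ℝ) :
    |deriv (fun t => ∫ x, g (t - ε * x) * ψ x) t|
      ≤ L * T ^ α * (∫ x, |deriv ψ x|) * ε ^ (α - 1) := by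
  have hψc : HasCompactSupport ψ :=
    IsCompact.of_isClosed_subset isCompact_Icc (isClosed_tsupport ψ) hψ_supp
  have hg_cont : Continuous g := continuous_of_abs_sub_le_mul_rpow hα hg
  have hψ'_cont : Continuous (deriv ψ) := hψ.continuous_deriv le_rfl
  have hψ'_int : Integrable (deriv ψ) := hψ'_cont.integrable_of_hasCompactSupport hψc.deriv
  set K := L * ε ^ α * T ^ α
  have hpoint : ∀ x, |(g (t - ε * x) - g t) * deriv ψ x| ≤ K * |deriv ψ x| := by
    intro x
    rw [abs_mul]
    by_cases hx : deriv ψ x = 0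
    · simp [hx]
    have hxT : x ∈ Icc 0 T := hψ_supp (support_deriv_subset hx)
    refine mul_le_mul_of_nonneg_right ?_ (abs_nonneg _)
    calc |g (t - ε * x) - g t| ≤ L * |t - ε * x - t| ^ α := hg _ _
      _ = L * ε ^ α * x ^ α := by
        rw [sub_sub_cancel_left, abs_neg, abs_mul, abs_of_pos hε, abs_of_nonneg hxT.1,
          Real.mul_rpow hε.le hxT.1, mul_assoc]
      _ ≤ L * ε ^ α * T ^ α := by
        have hL : 0 ≤ L := by simpa using (abs_nonneg _).trans (hg 1 0)
        gcongr
        exacts [hxT.1, hxT.2]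
  have hcentered : ∫ x, g (t - ε * x) * deriv ψ x = ∫ x, (g (t - ε * x) - g t) * deriv ψ x := by
    have hint : Integrable fun x => g (t - ε * x) * deriv ψ x :=
      ((hg_cont.comp (by fun_prop)).mul hψ'_cont).integrable_of_hasCompactSupport
        hψc.deriv.mul_left
    simp_rw [sub_mul]
    rw [integral_sub hint (hψ'_int.const_mul _), integral_const_mul,
      integral_deriv_eq_zero_of_hasCompactSupport hψ hψc, mul_zero, sub_zero]
  rw [(hasDerivAt_integral_comp_sub_mul_mul hg_cont hψ hψc hε t).deriv, hcentered, abs_mul,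
    abs_of_pos (inv_pos.2 hε)]
  calc ε⁻¹ * |∫ x, (g (t - ε * x) - g t) * deriv ψ x|
      ≤ ε⁻¹ * ∫ x, K * |deriv ψ x| := by
        gcongr
        exact (abs_integral_le_integral_abs).trans
          (integral_mono_of_nonneg (Eventually.of_forall fun _ => abs_nonneg _)
            (hψ'_int.abs.const_mul K) (Eventually.of_forall hpoint))
    _ = L * T ^ α * (∫ x, |deriv ψ x|) * ε ^ (α - 1) := by
        rw [integral_const_mul, Real.rpow_sub_one hε.ne']
        ring

lemma inv_mul_eq_smul_of_fin_two (l l' : ℝ) (hl : l ≠ 0) :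
    (!![1, 1; -l, l] : Matrix (Fin 2) (Fin 2) ℝ)⁻¹ * !![0, 0; -l', l']
      = (l' / (2 * l)) • !![1, -1; -1, 1] := by
  have hinv : (!![1, 1; -l, l] : Matrix (Fin 2) (Fin 2) ℝ)⁻¹ = (2 * l)⁻¹ • !![l, -1; l, 1] := by
    refine Matrix.inv_eq_right_inv ?_
    rw [Matrix.mul_smul, Matrix.mul_fin_two]
    ext i j
    fin_cases i <;> fin_cases j <;> simp <;> field_simp <;> ring
  rw [hinv, Matrix.smul_mul, Matrix.mul_fin_two]
  ext i j
  fin_cases i <;> fin_cases j <;> simp <;> field_simp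

lemma norm_toEuclideanCLM_inv_mul_le {c l l' D : ℝ} (hc : 0 < c) (hl : c ≤ l) (hl' : |l'| ≤ D) :
    ‖Matrix.toEuclideanCLM (𝕜 := ℝ)
        ((!![1, 1; -l, l] : Matrix (Fin 2) (Fin 2) ℝ)⁻¹ * !![0, 0; -l', l'])‖
      ≤ ‖Matrix.toEuclideanCLM (𝕜 := ℝ) (!![1, -1; -1, 1] : Matrix (Fin 2) (Fin 2) ℝ)‖
          / (2 * c) * D := by
  rw [inv_mul_eq_smul_of_fin_two _ _ (hc.trans_le hl).ne', map_smul, norm_smul,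
    Real.norm_eq_abs, abs_div, abs_of_pos (by linarith : 0 < 2 * l)]
  calc |l'| / (2 * l) * _ ≤ D / (2 * c) * _ := by
        gcongr
        exact (abs_nonneg _).trans hl'
    _ = _ := by ring

theorem Hmat_inv_deriv_bound_general
    (T α a₀ M : ℝ) (hα0 : 0 < α) (ha₀ : 0 < a₀)
    (a : ℝ → ℝ) (ha_low : ∀ t, a₀ ≤ a t)
    (hHol : ∀ t s : ℝ, |a t - a s| ≤ M * |t - s| ^ α)
    (ψ : ℝ → ℝ) (hψ_smooth : ContDiff ℝ (⊤ : ℕ∞) ψ)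
    (hψ_nonneg : ∀ x, 0 ≤ ψ x) (hψ_supp : tsupport ψ ⊆ Icc (0:ℝ) T)
    (hψ_int : ∫ x, ψ x = 1) :
    (∀ ε ∈ Ioc (0:ℝ) 1, ∀ t ∈ Icc (0:ℝ) T, IsUnit (Hmat a ψ ε t)) ∧
    ∃ C > 0, ∀ ε ∈ Ioc (0:ℝ) 1, ∀ t ∈ Icc (0:ℝ) T,
      ‖Matrix.toEuclideanCLM (𝕜 := ℝ) ((Hmat a ψ ε t)⁻¹ * HmatDeriv a ψ ε t)‖
        ≤ C * ε ^ (α - 1) := by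
  have hψ : ContDiff ℝ 1 ψ := hψ_smooth.of_le (by exact_mod_cast le_top)
  have hψc : HasCompactSupport ψ :=
    IsCompact.of_isClosed_subset isCompact_Icc (isClosed_tsupport ψ) hψ_supp
  have hsqrt_a : ∀ t s, |√(a t) - √(a s)| ≤ M / (2 * √a₀) * |t - s| ^ α := fun t s =>
    (abs_sqrt_sub_sqrt_le ha₀ (ha_low t) (ha_low s)).trans <| by
      rw [div_mul_eq_mul_div]; gcongr; exact hHol t s
  have hlam ε t : √a₀ ≤ lamEps a ψ ε t :=
    sqrt_le_lamEps (continuous_of_abs_sub_le_mul_rpow hα0 hHol) ha_low hψ.continuous hψc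
      hψ_nonneg hψ_int ε t
  refine ⟨fun ε _ t _ => ?_, ?_⟩
  · rw [Hmat, isUnit_iff_isUnit_det, det_fin_two_of, isUnit_iff_ne_zero]
    linarith [hlam ε t, Real.sqrt_pos.2 ha₀]
  set k := ‖Matrix.toEuclideanCLM (𝕜 := ℝ) (!![1, -1; -1, 1] : Matrix (Fin 2) (Fin 2) ℝ)‖
  set C₁ := M / (2 * √a₀) * T ^ α * ∫ x, |deriv ψ x|
  refine ⟨max (k / (2 * √a₀) * C₁) 1, by positivity, fun ε hε t _ => ?_⟩
  calc _ ≤ k / (2 * √a₀) * (C₁ * ε ^ (α - 1)) :=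
        norm_toEuclideanCLM_inv_mul_le (Real.sqrt_pos.2 ha₀) (hlam ε t)
          (abs_deriv_integral_comp_sub_mul_mul_le hα0 hsqrt_a hψ hψ_supp hε.1 t)
    _ ≤ max (k / (2 * √a₀) * C₁) 1 * ε ^ (α - 1) := by
        rw [← mul_assoc]
        exact mul_le_mul_of_nonneg_right (le_max_left _ _) (Real.rpow_nonneg hε.1.le _)

/-- `H(t)` is invertible and `‖H(t)⁻¹ (d/dt)H(t)‖ ≤ C ε^(α-1)` in the operator norm on `ℝ²`. -/
theorem Hmat_inv_deriv_bound
    (T α a₀ M : ℝ) (hT : 0 < T) (hα0 : 0 < α) (hα1 : α < 1) (ha₀ : 0 < a₀)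
    (a : ℝ → ℝ) (ha_low : ∀ t, a₀ ≤ a t)
    (hHol : ∀ t s : ℝ, |a t - a s| ≤ M * |t - s| ^ α)
    (ψ : ℝ → ℝ) (hψ_smooth : ContDiff ℝ (⊤ : ℕ∞) ψ)
    (hψ_nonneg : ∀ x, 0 ≤ ψ x) (hψ_supp : tsupport ψ ⊆ Icc (0:ℝ) T)
    (hψ_int : ∫ x, ψ x = 1) :
    (∀ ε ∈ Ioc (0:ℝ) 1, ∀ t ∈ Icc (0:ℝ) T, IsUnit (Hmat a ψ ε t)) ∧
    ∃ C > 0, ∀ ε ∈ Ioc (0:ℝ) 1, ∀ t ∈ Icc (0:ℝ) T,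
      ‖Matrix.toEuclideanCLM (𝕜 := ℝ) ((Hmat a ψ ε t)⁻¹ * HmatDeriv a ψ ε t)‖
        ≤ C * ε ^ (α - 1) :=
  Hmat_inv_deriv_bound_general T α a₀ M hα0 ha₀ a ha_low hHol ψ hψ_smooth hψ_nonneg hψ_supp hψ_int
end

section
/- Let T>0, 0<α<1, a₀>0, and let a:ℝ→ℝ be Hölder continuous of order α, bounded, with a(t) ≥ a₀ for all t. Let ψ be a mollifier supported in [0,T], λ^ε = √a * ψ_ε, A(t) = [[0,1],[a(t),0]] and H(t) = [[1,1],[−λ^ε(t), λ^ε(t)]]. Then H(t)⁻¹A(t)H(t) − (H(t)⁻¹A(t)H(t))ᵀ = (2λ^ε(t))⁻¹ · [[0, −2a(t)+2(λ^ε(t))²],[2a(t)−2(λ^ε(t))², 0]], and there exists C > 0, depending only on α, a₀, ‖a‖_{C^α}, sup √a and T, such that ‖H(t)⁻¹A(t)H(t) − (H(t)⁻¹A(t)H(t))ᵀ‖ ≤ C ε^α for all t ∈ [0,T] and all ε ∈ (0,1]. -/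
open Set MeasureTheory Matrix

/-- The matrix `A(t) = [[0,1],[a(t),0]]`. -/
def Amat (a : ℝ → ℝ) (t : ℝ) : Matrix (Fin 2) (Fin 2) ℝ :=
  !![0, 1; a t, 0]

lemma transpose_fin2 (p q r s : ℝ) : (!![p,q;r,s])ᵀ = !![p,r;q,s] := by
  ext i j; fin_cases i <;> fin_cases j <;> simp

lemma smul_fin2 (c p q r s : ℝ) :
    c • (!![p,q;r,s] : Matrix (Fin 2) (Fin 2) ℝ) = !![c*p,c*q;c*r,c*s] := by
  ext i j; fin_cases i <;> fin_cases j <;> simp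

lemma sqrt_diff_le (a₀ u v : ℝ) (h : 0 < a₀) (hu : a₀ ≤ u) (hv : a₀ ≤ v) :
    |Real.sqrt u - Real.sqrt v| ≤ |u - v| / (2 * Real.sqrt a₀) := by
  have hs : 0 < Real.sqrt a₀ := Real.sqrt_pos.2 h
  have hsum : 2 * Real.sqrt a₀ ≤ Real.sqrt u + Real.sqrt v := by
    have := Real.sqrt_le_sqrt hu; have := Real.sqrt_le_sqrt hv; linarith
  have hsum0 : 0 < Real.sqrt u + Real.sqrt v := by linarith
  have key : |Real.sqrt u - Real.sqrt v| * (Real.sqrt u + Real.sqrt v) = |u - v| := by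
    rw [← abs_of_pos hsum0, ← abs_mul]
    congr 1
    have hu0 : 0 ≤ u := le_trans h.le hu
    have hv0 : 0 ≤ v := le_trans h.le hv
    nlinarith [Real.sq_sqrt hu0, Real.sq_sqrt hv0]
  rw [le_div_iff₀ (by positivity), ← key]
  exact mul_le_mul_of_nonneg_left hsum (abs_nonneg _)

set_option synthInstance.maxHeartbeats 1000000 in
lemma norm_toEuclideanCLM_smul_J (k : ℝ) :
    ‖Matrix.toEuclideanCLM (𝕜 := ℝ) (n := Fin 2) (k • !![0,-1;1,0])‖
      = |k| * ‖Matrix.toEuclideanCLM (𝕜 := ℝ) (n := Fin 2)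
          (!![0,-1;1,0] : Matrix (Fin 2) (Fin 2) ℝ)‖ := by
  rw [_root_.map_smul]
  rw [norm_smul k (Matrix.toEuclideanCLM (𝕜 := ℝ) (n := Fin 2) !![0,-1;1,0]),
    Real.norm_eq_abs]

set_option maxHeartbeats 1000000 in
set_option synthInstance.maxHeartbeats 1000000 in
/-- Identity and `ε^α` operator-norm bound for `H⁻¹AH − (H⁻¹AH)ᵀ`. -/
theorem Hmat_conj_Amat_skew_bound
    (T α a₀ M S : ℝ) (hT : 0 < T) (hα0 : 0 < α) (hα1 : α < 1) (ha₀ : 0 < a₀)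
    (a : ℝ → ℝ) (ha_low : ∀ t, a₀ ≤ a t)
    (hHol : ∀ t s : ℝ, |a t - a s| ≤ M * |t - s| ^ α)
    (ha_bd : ∀ t, Real.sqrt (a t) ≤ S)
    (ψ : ℝ → ℝ) (hψ_smooth : ContDiff ℝ (⊤ : ℕ∞) ψ)
    (hψ_nonneg : ∀ x, 0 ≤ ψ x) (hψ_supp : tsupport ψ ⊆ Icc (0:ℝ) T)
    (hψ_int : ∫ x, ψ x = 1) :
    (∀ ε ∈ Ioc (0:ℝ) 1, ∀ t ∈ Icc (0:ℝ) T,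
      (Hmat a ψ ε t)⁻¹ * Amat a t * Hmat a ψ ε t
          - ((Hmat a ψ ε t)⁻¹ * Amat a t * Hmat a ψ ε t)ᵀ
        = (2 * lamEps a ψ ε t)⁻¹ •
            !![0, -2 * a t + 2 * (lamEps a ψ ε t) ^ 2;
               2 * a t - 2 * (lamEps a ψ ε t) ^ 2, 0]) ∧
    ∃ C > 0, ∀ ε ∈ Ioc (0:ℝ) 1, ∀ t ∈ Icc (0:ℝ) T,
      ‖Matrix.toEuclideanCLM (𝕜 := ℝ)
          ((Hmat a ψ ε t)⁻¹ * Amat a t * Hmat a ψ ε t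
            - ((Hmat a ψ ε t)⁻¹ * Amat a t * Hmat a ψ ε t)ᵀ)‖
        ≤ C * ε ^ α := by
  -- basic positivity facts
  have hs0 : 0 < Real.sqrt a₀ := Real.sqrt_pos.2 ha₀
  have hS : 0 < S := lt_of_lt_of_le hs0 ((Real.sqrt_le_sqrt (ha_low 0)).trans (ha_bd 0))
  have hM0 : 0 ≤ M := by
    have h := hHol 0 1
    have h1 : |(0:ℝ) - 1| = 1 := by norm_num
    rw [h1, Real.one_rpow, mul_one] at h
    exact le_trans (abs_nonneg _) h
  -- continuity of a
  have ha_cont : Continuous a := by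
    rw [Metric.continuous_iff]
    intro t δ hδ
    refine ⟨(δ / (M + 1)) ^ (1/α), Real.rpow_pos_of_pos (by positivity) _, fun s hs => ?_⟩
    have h1 : |s - t| ^ α < ((δ / (M + 1)) ^ (1/α)) ^ α :=
      Real.rpow_lt_rpow (abs_nonneg _) hs hα0
    rw [← Real.rpow_mul (by positivity), one_div, inv_mul_cancel₀ hα0.ne',
      Real.rpow_one] at h1
    calc dist (a s) (a t) = |a s - a t| := Real.dist_eq _ _
      _ ≤ M * |s - t| ^ α := hHol s t
      _ ≤ (M+1) * |s - t| ^ α := by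
          have : (0:ℝ) ≤ |s - t| ^ α := Real.rpow_nonneg (abs_nonneg _) _
          nlinarith
      _ < (M+1) * (δ / (M+1)) := mul_lt_mul_of_pos_left h1 (by positivity)
      _ = δ := by field_simp
  have hψ_cont : Continuous ψ := hψ_smooth.continuous
  have hψ_cs : HasCompactSupport ψ :=
    HasCompactSupport.of_support_subset_isCompact isCompact_Icc
      ((subset_tsupport ψ).trans hψ_supp)
  have hψ_int' : Integrable ψ := hψ_cont.integrable_of_hasCompactSupport hψ_cs
  -- the constant in the pointwise Hölder bound for √a
  set D : ℝ := M * T ^ α / (2 * Real.sqrt a₀) with hD_def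
  have hD : 0 ≤ D := by
    have : (0:ℝ) ≤ T ^ α := Real.rpow_nonneg hT.le _
    positivity
  -- key bounds on lamEps
  have hkey : ∀ ε ∈ Ioc (0:ℝ) 1, ∀ t : ℝ,
      Real.sqrt a₀ ≤ lamEps a ψ ε t ∧ lamEps a ψ ε t ≤ S ∧
      |Real.sqrt (a t) - lamEps a ψ ε t| ≤ D * ε ^ α := by
    rintro ε ⟨hε, hε1⟩ t
    have hεα : (0:ℝ) ≤ ε ^ α := Real.rpow_nonneg hε.le _
    have hf_cont : Continuous fun x => Real.sqrt (a (t - ε * x)) * ψ x :=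
      ((ha_cont.comp (continuous_const.sub (continuous_const.mul continuous_id))).sqrt).mul
        hψ_cont
    have hf_cs : HasCompactSupport fun x => Real.sqrt (a (t - ε * x)) * ψ x :=
      hψ_cs.mul_left
    have hf_int : Integrable fun x => Real.sqrt (a (t - ε * x)) * ψ x :=
      hf_cont.integrable_of_hasCompactSupport hf_cs
    have hpt : ∀ x ∈ Icc (0:ℝ) T,
        |Real.sqrt (a t) - Real.sqrt (a (t - ε * x))| ≤ D * ε ^ α := by
      rintro x ⟨hx0, hxT⟩
      calc |Real.sqrt (a t) - Real.sqrt (a (t - ε * x))|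
          ≤ |a t - a (t - ε * x)| / (2 * Real.sqrt a₀) :=
            sqrt_diff_le a₀ _ _ ha₀ (ha_low _) (ha_low _)
        _ ≤ (M * |t - (t - ε * x)| ^ α) / (2 * Real.sqrt a₀) := by
            apply div_le_div_of_nonneg_right (hHol _ _) (by positivity)
        _ ≤ D * ε ^ α := by
            have h2 : |t - (t - ε * x)| = ε * x := by
              rw [show t - (t - ε * x) = ε * x by ring, abs_of_nonneg (by positivity)]
            rw [h2, Real.mul_rpow hε.le hx0]
            have hxa : x ^ α ≤ T ^ α := Real.rpow_le_rpow hx0 hxT hα0.le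
            rw [hD_def]
            rw [div_mul_eq_mul_div, le_div_iff₀ (by positivity)]
            have hTa : (0:ℝ) ≤ T ^ α := Real.rpow_nonneg hT.le _
            have hcancel : M * (ε ^ α * x ^ α) / (2 * Real.sqrt a₀) * (2 * Real.sqrt a₀)
                = M * (ε ^ α * x ^ α) := div_mul_cancel₀ _ (by positivity)
            rw [hcancel]
            have hxa0 : (0:ℝ) ≤ x ^ α := Real.rpow_nonneg hx0 _
            nlinarith [mul_nonneg hM0 hεα, mul_nonneg (mul_nonneg hM0 hεα) (sub_nonneg.2 hxa)]
    refine ⟨?_, ?_, ?_⟩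
    · calc Real.sqrt a₀ = ∫ x, Real.sqrt a₀ * ψ x := by
            rw [integral_const_mul, hψ_int, mul_one]
        _ ≤ _ := by
            refine integral_mono (hψ_int'.const_mul _) hf_int fun x => ?_
            exact mul_le_mul_of_nonneg_right (Real.sqrt_le_sqrt (ha_low _)) (hψ_nonneg x)
    · calc lamEps a ψ ε t ≤ ∫ x, S * ψ x := by
            refine integral_mono hf_int (hψ_int'.const_mul _) fun x => ?_
            exact mul_le_mul_of_nonneg_right (ha_bd _) (hψ_nonneg x)
        _ = S := by rw [integral_const_mul, hψ_int, mul_one]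
    · have hg_int : Integrable fun x =>
          (Real.sqrt (a t) - Real.sqrt (a (t - ε * x))) * ψ x := by
        have heq : (fun x => (Real.sqrt (a t) - Real.sqrt (a (t - ε * x))) * ψ x)
            = fun x => Real.sqrt (a t) * ψ x - Real.sqrt (a (t - ε * x)) * ψ x := by
          funext x; ring
        rw [heq]
        exact (hψ_int'.const_mul _).sub hf_int
      have heq : Real.sqrt (a t) - lamEps a ψ ε t
          = ∫ x, (Real.sqrt (a t) - Real.sqrt (a (t - ε * x))) * ψ x := by
        have h3 : ∀ x, (Real.sqrt (a t) - Real.sqrt (a (t - ε * x))) * ψ x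
            = Real.sqrt (a t) * ψ x - Real.sqrt (a (t - ε * x)) * ψ x := fun x => by ring
        simp_rw [h3]
        rw [integral_sub (hψ_int'.const_mul _) hf_int, integral_const_mul, hψ_int, mul_one]
        rfl
      rw [heq]
      calc |∫ x, (Real.sqrt (a t) - Real.sqrt (a (t - ε * x))) * ψ x|
          ≤ ∫ x, ‖(Real.sqrt (a t) - Real.sqrt (a (t - ε * x))) * ψ x‖ :=
            (Real.norm_eq_abs _) ▸ norm_integral_le_integral_norm _
        _ ≤ ∫ x, (D * ε ^ α) * ψ x := by
            refine integral_mono hg_int.abs (hψ_int'.const_mul _) fun x => ?_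
            rw [Real.norm_eq_abs, abs_mul, abs_of_nonneg (hψ_nonneg x)]
            by_cases hx : ψ x = 0
            · simp [hx]
            · have hxT : x ∈ Icc (0:ℝ) T := hψ_supp (subset_tsupport ψ hx)
              exact mul_le_mul_of_nonneg_right (hpt x hxT) (hψ_nonneg x)
        _ = D * ε ^ α := by rw [integral_const_mul, hψ_int, mul_one]
  -- the identity
  have hid : ∀ ε ∈ Ioc (0:ℝ) 1, ∀ t ∈ Icc (0:ℝ) T,
      (Hmat a ψ ε t)⁻¹ * Amat a t * Hmat a ψ ε t
          - ((Hmat a ψ ε t)⁻¹ * Amat a t * Hmat a ψ ε t)ᵀ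
        = (2 * lamEps a ψ ε t)⁻¹ •
            !![0, -2 * a t + 2 * (lamEps a ψ ε t) ^ 2;
               2 * a t - 2 * (lamEps a ψ ε t) ^ 2, 0] := by
    intro ε hε t ht
    have hl0 : 0 < lamEps a ψ ε t := lt_of_lt_of_le hs0 (hkey ε hε t).1
    set l := lamEps a ψ ε t with hl_def
    have hl : l ≠ 0 := hl0.ne'
    have hinv : (Hmat a ψ ε t)⁻¹ = !![1/2, -(2*l)⁻¹; 1/2, (2*l)⁻¹] := by
      apply Matrix.inv_eq_right_inv
      show (!![1, 1; -l, l] : Matrix (Fin 2) (Fin 2) ℝ) * _ = 1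
      ext i j
      fin_cases i <;> fin_cases j <;>
        (simp [Matrix.mul_apply, Fin.sum_univ_two]; try field_simp) <;> ring
    rw [hinv]
    show (!![1/2, -(2*l)⁻¹; 1/2, (2*l)⁻¹] : Matrix (Fin 2) (Fin 2) ℝ)
          * !![0, 1; a t, 0] * !![1, 1; -l, l]
        - ((!![1/2, -(2*l)⁻¹; 1/2, (2*l)⁻¹] : Matrix (Fin 2) (Fin 2) ℝ)
          * !![0, 1; a t, 0] * !![1, 1; -l, l])ᵀ
        = (2 * l)⁻¹ • !![0, -2 * a t + 2 * l ^ 2; 2 * a t - 2 * l ^ 2, 0]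
    rw [Matrix.mul_fin_two, Matrix.mul_fin_two, transpose_fin2, smul_fin2]
    ext i j
    fin_cases i <;> fin_cases j <;>
      (simp [Matrix.sub_apply]; try field_simp) <;> ring
  refine ⟨hid, ?_⟩
  -- the norm bound
  set c₀ : ℝ := ‖Matrix.toEuclideanCLM (𝕜 := ℝ) (n := Fin 2)
      (!![0,-1;1,0] : Matrix (Fin 2) (Fin 2) ℝ)‖ with hc₀_def
  have hc₀ : 0 ≤ c₀ := norm_nonneg _
  refine ⟨c₀ * (2 * S * D / Real.sqrt a₀) + 1, by positivity, ?_⟩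
  intro ε hε t ht
  have hεα : (0:ℝ) < ε ^ α := Real.rpow_pos_of_pos hε.1 _
  obtain ⟨hk1, hk2, hk3⟩ := hkey ε hε t
  have hl0 : 0 < lamEps a ψ ε t := lt_of_lt_of_le hs0 hk1
  set l := lamEps a ψ ε t with hl_def
  set k : ℝ := (a t - l ^ 2) / l with hk_def
  have hmat_eq : (2 * l)⁻¹ • (!![0, -2 * a t + 2 * l ^ 2; 2 * a t - 2 * l ^ 2, 0]
        : Matrix (Fin 2) (Fin 2) ℝ) = k • !![0,-1;1,0] := by
    rw [smul_fin2, smul_fin2, hk_def]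
    have hl : l ≠ 0 := hl0.ne'
    congr 1 <;> field_simp <;> ring
  rw [hid ε hε t ht, hmat_eq, norm_toEuclideanCLM_smul_J, ← hc₀_def]
  -- bound |k|
  have hsq : 0 ≤ Real.sqrt (a t) := Real.sqrt_nonneg _
  have hnum : |a t - l ^ 2| ≤ (D * ε ^ α) * (2 * S) := by
    have hfac : a t - l ^ 2 = (Real.sqrt (a t) - l) * (Real.sqrt (a t) + l) := by
      have := Real.sq_sqrt (le_trans ha₀.le (ha_low t))
      nlinarith
    rw [hfac, abs_mul]
    have h1 : |Real.sqrt (a t) + l| ≤ 2 * S := by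
      rw [abs_of_nonneg (by positivity)]
      have := ha_bd t; linarith
    have h2 : (0:ℝ) ≤ |Real.sqrt (a t) + l| := abs_nonneg _
    nlinarith [abs_nonneg (Real.sqrt (a t) - l), hk3]
  have hkabs : |k| ≤ (2 * S * D / Real.sqrt a₀) * ε ^ α := by
    rw [hk_def, abs_div, abs_of_pos hl0]
    calc |a t - l ^ 2| / l ≤ ((D * ε ^ α) * (2 * S)) / Real.sqrt a₀ :=
          div_le_div₀ (by positivity) hnum hs0 hk1
      _ = (2 * S * D / Real.sqrt a₀) * ε ^ α := by ring
  calc |k| * c₀ ≤ ((2 * S * D / Real.sqrt a₀) * ε ^ α) * c₀ :=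
        mul_le_mul_of_nonneg_right hkabs hc₀
    _ = (c₀ * (2 * S * D / Real.sqrt a₀)) * ε ^ α := by ring
    _ ≤ (c₀ * (2 * S * D / Real.sqrt a₀) + 1) * ε ^ α := by nlinarith
end

section
/- Let T>0, let a:[0,T]→ℝ satisfy a(t) ≥ 0 for all t, let A(t) = [[0,1],[a(t),0]] and P_ε(t) = [[a(t)+ε², 0],[0,1]] for ε ∈ (0,1]. Then P_ε(t)A(t) − A(t)ᵀP_ε(t) = [[0, ε²],[−ε², 0]], and for every t ∈ [0,T], every ε ∈ (0,1] and every V ∈ ℂ²: |⟨(P_ε(t)A(t) − A(t)ᵀP_ε(t)) V, V⟩| ≤ ε ⟨P_ε(t)V, V⟩. -/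
open Set MeasureTheory Matrix

/-- The quasi-symmetriser `P_ε(t) = [[a(t)+ε², 0],[0,1]]` as a complex matrix. -/
noncomputable def Pmat (a : ℝ → ℝ) (ε t : ℝ) : Matrix (Fin 2) (Fin 2) ℂ :=
  !![((a t + ε ^ 2 : ℝ) : ℂ), 0; 0, 1]

/-- The matrix `A(t) = [[0,1],[a(t),0]]` as a complex matrix. -/
noncomputable def AmatC (a : ℝ → ℝ) (t : ℝ) : Matrix (Fin 2) (Fin 2) ℂ :=
  !![0, 1; ((a t : ℝ) : ℂ), 0]

/-!
The commutator `P_ε A − Aᵀ P_ε` is the constant skew matrix `[[0, ε²], [−ε², 0]]`, whose quadratic form is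
bounded by `2ε² |V₀| |V₁|`. By AM–GM, `2ε |V₀| |V₁| ≤ ε² |V₀|² + |V₁|²`, and since `a ≥ 0` the
right-hand side is at most `⟨P_ε V, V⟩`; multiplying by `ε` gives the bound.
-/

section FinTwo

variable {𝕜 : Type*} [RCLike 𝕜]

open ComplexConjugate

lemma inner_toEuclideanCLM_fin_two (M : Matrix (Fin 2) (Fin 2) 𝕜) (V : EuclideanSpace 𝕜 (Fin 2)) :
    inner 𝕜 (toEuclideanCLM (𝕜 := 𝕜) M V) V
      = conj (M 0 0 * V 0 + M 0 1 * V 1) * V 0 + conj (M 1 0 * V 0 + M 1 1 * V 1) * V 1 := by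
  simp [EuclideanSpace.inner_eq_star_dotProduct, dotProduct, Fin.sum_univ_two, mul_comm]

lemma norm_inner_toEuclideanCLM_skew_le (c : ℝ) (V : EuclideanSpace 𝕜 (Fin 2)) :
    ‖inner 𝕜 (toEuclideanCLM (𝕜 := 𝕜) !![0, (c : 𝕜); -(c : 𝕜), 0] V) V‖
      ≤ 2 * |c| * (‖V 0‖ * ‖V 1‖) := by
  rw [inner_toEuclideanCLM_fin_two]
  simp only [of_apply, cons_val', cons_val_zero, cons_val_one, empty_val', cons_val_fin_one,
    zero_mul, zero_add, add_zero, neg_mul, map_neg, map_mul, RCLike.conj_ofReal]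
  calc _ ≤ ‖(c : 𝕜) * conj (V 1) * V 0‖ + ‖-((c : 𝕜) * conj (V 0) * V 1)‖ := norm_add_le _ _
    _ = 2 * |c| * (‖V 0‖ * ‖V 1‖) := by
        simp only [norm_neg, norm_mul, RCLike.norm_conj, RCLike.norm_ofReal]
        ring

lemma re_inner_toEuclideanCLM_diag (x : ℝ) (V : EuclideanSpace 𝕜 (Fin 2)) :
    RCLike.re (inner 𝕜 (toEuclideanCLM (𝕜 := 𝕜) !![(x : 𝕜), 0; 0, 1] V) V)
      = x * ‖V 0‖ ^ 2 + ‖V 1‖ ^ 2 := by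
  rw [inner_toEuclideanCLM_fin_two]
  simp only [of_apply, cons_val', cons_val_zero, cons_val_one, empty_val', cons_val_fin_one,
    zero_mul, zero_add, add_zero, one_mul, map_mul, RCLike.conj_ofReal, mul_assoc,
    RCLike.conj_mul]
  norm_cast

end FinTwo

lemma two_mul_sq_mul_mul_le {ε c x y : ℝ} (hε : 0 ≤ ε) (hc : 0 ≤ c) :
    2 * ε ^ 2 * (x * y) ≤ ε * ((c + ε ^ 2) * x ^ 2 + y ^ 2) :=
  calc 2 * ε ^ 2 * (x * y) = ε * (2 * (ε * x) * y) := by ring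
    _ ≤ ε * ((ε * x) ^ 2 + y ^ 2) := by gcongr; exact two_mul_le_add_sq _ _
    _ ≤ ε * ((c + ε ^ 2) * x ^ 2 + y ^ 2) := by gcongr; nlinarith [sq_nonneg x]

lemma Pmat_mul_AmatC_sub_transpose_mul_Pmat (a : ℝ → ℝ) (ε t : ℝ) :
    Pmat a ε t * AmatC a t - (AmatC a t)ᵀ * Pmat a ε t
      = !![0, ((ε ^ 2 : ℝ) : ℂ); -((ε ^ 2 : ℝ) : ℂ), 0] := by
  ext i j
  fin_cases i <;> fin_cases j <;> simp [Pmat, AmatC, mul_apply, Fin.sum_univ_two]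

theorem quasi_symmetriser_commutator_bound_general
    (T : ℝ) (a : ℝ → ℝ)
    (ha_nonneg : ∀ t ∈ Icc (0:ℝ) T, 0 ≤ a t) :
    ∀ t ∈ Icc (0:ℝ) T, ∀ ε ∈ Ioc (0:ℝ) 1,
      (Pmat a ε t * AmatC a t - (AmatC a t)ᵀ * Pmat a ε t
        = !![0, ((ε ^ 2 : ℝ) : ℂ); -((ε ^ 2 : ℝ) : ℂ), 0]) ∧
      ∀ V : EuclideanSpace ℂ (Fin 2),
        ‖(inner ℂ ((Matrix.toEuclideanCLM (𝕜 := ℂ)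
              (Pmat a ε t * AmatC a t - (AmatC a t)ᵀ * Pmat a ε t)) V) V : ℂ)‖
          ≤ ε * ((inner ℂ ((Matrix.toEuclideanCLM (𝕜 := ℂ) (Pmat a ε t)) V) V : ℂ)).re := by
  intro t ht ε hε
  rw [Pmat_mul_AmatC_sub_transpose_mul_Pmat]
  refine ⟨rfl, fun V => ?_⟩
  calc _ ≤ 2 * |ε ^ 2| * (‖V 0‖ * ‖V 1‖) := norm_inner_toEuclideanCLM_skew_le _ V
    _ ≤ ε * ((a t + ε ^ 2) * ‖V 0‖ ^ 2 + ‖V 1‖ ^ 2) := by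
        rw [abs_sq]
        exact two_mul_sq_mul_mul_le hε.1.le (ha_nonneg t ht)
    _ = _ := congrArg (ε * ·) (re_inner_toEuclideanCLM_diag (𝕜 := ℂ) _ V).symm

/-- `P_ε A − Aᵀ P_ε = [[0,ε²],[−ε²,0]]` and the quadratic form of the commutator is
controlled by `ε ⟨P_ε V, V⟩`. -/
theorem quasi_symmetriser_commutator_bound
    (T : ℝ) (hT : 0 < T) (a : ℝ → ℝ)
    (ha_nonneg : ∀ t ∈ Icc (0:ℝ) T, 0 ≤ a t) :
    ∀ t ∈ Icc (0:ℝ) T, ∀ ε ∈ Ioc (0:ℝ) 1,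
      (Pmat a ε t * AmatC a t - (AmatC a t)ᵀ * Pmat a ε t
        = !![0, ((ε ^ 2 : ℝ) : ℂ); -((ε ^ 2 : ℝ) : ℂ), 0]) ∧
      ∀ V : EuclideanSpace ℂ (Fin 2),
        ‖(inner ℂ ((Matrix.toEuclideanCLM (𝕜 := ℂ)
              (Pmat a ε t * AmatC a t - (AmatC a t)ᵀ * Pmat a ε t)) V) V : ℂ)‖
          ≤ ε * ((inner ℂ ((Matrix.toEuclideanCLM (𝕜 := ℂ) (Pmat a ε t)) V) V : ℂ)).re :=
  quasi_symmetriser_commutator_bound_general T a ha_nonneg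
end

section
/- Let T>0 and 0<α<2. Assume a:ℝ→ℝ is Hölder continuous of order α, bounded, with a(t) ≥ 0 for all t, and q:[0,T]→ℝ is essentially bounded. Let s satisfy 1 ≤ s < 1 + α/2, and let c₀, A > 0. Then there exist constants C, K > 0, depending only on T, α, ‖a‖_{C^α}, ‖q‖_{L^∞}, s, c₀ and A (and independent of λ), such that for every λ ≥ 0, every continuous f:[0,T]→ℂ with |f(t)| ≤ c₀ e^{−A(1+λ)^{1/(2s)}} for all t, and every twice continuously differentiable v:[0,T]→ℂ satisfying v''(t) + λ a(t) v(t) + q(t) v(t) = f(t) on [0,T], one has (1+λ)|v(t)|² + |v'(t)|² ≤ C e^{K(1+λ)^{1/(2s)}} ( (1+λ)|v(0)|² + |v'(0)|² + 1 ) for all t ∈ [0,T]. -/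
/-!
Regularise the speed: replace `a` by its average `a_ε` over `[t, t + ε]` and use the energy
`E = (λ a_ε + X²) |v|² + |v'|²` with `X = (1 + λ)^(1/(2s))`. Hölder continuity gives
`|a_ε - a| ≤ M ε^α` and `|a_ε'| ≤ M ε^(α-1)`. For `ε = X^(-2(s-1)/α)` the errors `λ |a_ε - a|`
and `λ |a_ε'|` are at most `M X²` and `M X³` (the latter exactly because `s ≤ 1 + α/2`), so
`E' ≤ C X E + c₀²`. Grönwall gives growth `exp (C X T)`, and the factor `1 + λ ≤ exp (2 s X)`
lost when comparing `E` with `(1 + λ) |v|² + |v'|²` is absorbed into the exponent.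
-/

open Set MeasureTheory

open Real

theorem continuous_of_dist_le_mul_rpow {X Y : Type*} [PseudoMetricSpace X] [PseudoMetricSpace Y]
    {f : X → Y} {M α : ℝ} (hα : 0 < α) (h : ∀ x y, dist (f x) (f y) ≤ M * dist x y ^ α) :
    Continuous f := by
  refine continuous_iff_continuousAt.2 fun x => tendsto_iff_dist_tendsto_zero.2 ?_
  refine squeeze_zero (fun _ => dist_nonneg) (fun y => h y x) ?_
  have hcont : Continuous fun y => M * dist y x ^ α :=
    ((continuous_id.dist continuous_const).rpow_const fun _ => Or.inr hα.le).const_mul M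
  simpa [zero_rpow hα.ne'] using hcont.tendsto x

noncomputable def slidingAverage (a : ℝ → ℝ) (ε t : ℝ) : ℝ := ε⁻¹ * ∫ u in t..t + ε, a u

section SlidingAverage

variable {a : ℝ → ℝ} {ε : ℝ}

theorem hasDerivAt_slidingAverage (ha : Continuous a) (t : ℝ) :
    HasDerivAt (slidingAverage a ε) (ε⁻¹ * (a (t + ε) - a t)) t := by
  have hF : ∀ x, HasDerivAt (fun y => ∫ u in (0 : ℝ)..y, a u) (a x) x := fun x =>
    (ha.integral_hasStrictDerivAt 0 x).hasDerivAt
  have hsub : slidingAverage a ε = fun x => ε⁻¹ *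
      ((∫ u in (0 : ℝ)..x + ε, a u) - ∫ u in (0 : ℝ)..x, a u) := by
    ext x
    rw [slidingAverage, intervalIntegral.integral_interval_sub_left
      (ha.intervalIntegrable _ _) (ha.intervalIntegrable _ _)]
  rw [hsub]
  exact ((((hF (t + ε)).comp_add_const t ε)).sub (hF t)).const_mul ε⁻¹

theorem slidingAverage_nonneg (hε : 0 ≤ ε) (ha : ∀ t, 0 ≤ a t) (t : ℝ) :
    0 ≤ slidingAverage a ε t :=
  mul_nonneg (inv_nonneg.2 hε)
    (intervalIntegral.integral_nonneg (by linarith) fun u _ => ha u)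

theorem abs_slidingAverage_le (hε : 0 < ε) {B : ℝ} (ha : ∀ t, |a t| ≤ B) (t : ℝ) :
    |slidingAverage a ε t| ≤ B := by
  have h := intervalIntegral.norm_integral_le_of_norm_le_const (a := t) (b := t + ε)
    (f := a) fun u _ => ha u
  rw [add_sub_cancel_left, abs_of_pos hε, Real.norm_eq_abs] at h
  rw [slidingAverage, abs_mul, abs_inv, abs_of_pos hε, inv_mul_le_iff₀ hε]
  linarith

theorem abs_slidingAverage_sub_le (hε : 0 < ε) (ha : Continuous a) {M α : ℝ} (hM : 0 ≤ M)
    (hα : 0 ≤ α) (hHol : ∀ t u, |a t - a u| ≤ M * |t - u| ^ α) (t : ℝ) :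
    |slidingAverage a ε t - a t| ≤ M * ε ^ α := by
  have hint : ∫ u in t..t + ε, (a u - a t) = (∫ u in t..t + ε, a u) - ε * a t := by
    rw [intervalIntegral.integral_sub (ha.intervalIntegrable _ _) intervalIntegrable_const,
      intervalIntegral.integral_const, add_sub_cancel_left, smul_eq_mul]
  have hbound : ‖∫ u in t..t + ε, (a u - a t)‖ ≤ M * ε ^ α * |t + ε - t| := by
    refine intervalIntegral.norm_integral_le_of_norm_le_const fun u hu => ?_
    rw [uIoc_of_le (by linarith)] at hu
    calc |a u - a t| ≤ M * |u - t| ^ α := hHol u t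
      _ ≤ M * ε ^ α := by
        gcongr
        rw [abs_of_nonneg (by linarith [hu.1])]
        linarith [hu.2]
  rw [hint, add_sub_cancel_left, abs_of_pos hε, Real.norm_eq_abs] at hbound
  have heq : slidingAverage a ε t - a t = ε⁻¹ * ((∫ u in t..t + ε, a u) - ε * a t) := by
    rw [slidingAverage]; field_simp
  rw [heq, abs_mul, abs_inv, abs_of_pos hε, inv_mul_le_iff₀ hε]
  linarith

end SlidingAverage

theorem le_mul_exp_of_hasDerivAt_le_mul {f f' : ℝ → ℝ} {K a b : ℝ}
    (hf : ∀ t ∈ Icc a b, HasDerivAt f (f' t) t) (h : ∀ t ∈ Ico a b, f' t ≤ K * f t) :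
    ∀ t ∈ Icc a b, f t ≤ f a * exp (K * (t - a)) := by
  intro t ht
  have hgr := le_gronwallBound_of_liminf_deriv_right_le (δ := f a) (ε := 0)
    (fun x hx => (hf x hx).continuousAt.continuousWithinAt)
    (fun x hx _ hr => (hf x (Ico_subset_Icc_self hx)).hasDerivWithinAt.liminf_right_slope_le hr)
    le_rfl (by simpa using h) t ht
  rwa [gronwallBound_ε0] at hgr

section Energy

variable {E : Type*} [NormedAddCommGroup E] [InnerProductSpace ℝ E]

noncomputable def waveEnergy (c : ℝ → ℝ) (v v' : ℝ → E) (t : ℝ) : ℝ :=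
  c t * ‖v t‖ ^ 2 + ‖v' t‖ ^ 2

theorem waveEnergy_deriv_le {X P Q c c' b F : ℝ} {u u' g : E} (hX : 1 ≤ X) (hP : 0 ≤ P)
    (hQ : 0 ≤ Q) (hcX : X ^ 2 ≤ c) (hc' : |c'| ≤ P * X * c) (hcb : |c - b| ≤ Q * X ^ 2)
    (hg : ‖g‖ ≤ F) :
    c' * ‖u‖ ^ 2 + 2 * (c - b) * inner ℝ u u' + 2 * inner ℝ u' g ≤
      (P + Q + 1) * X * (c * ‖u‖ ^ 2 + ‖u'‖ ^ 2) + F ^ 2 := by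
  have hc0 : 0 ≤ c := (sq_nonneg X).trans hcX
  have hcoef : c' * ‖u‖ ^ 2 ≤ P * X * (c * ‖u‖ ^ 2) := by
    rw [← mul_assoc]; exact mul_le_mul_of_nonneg_right ((le_abs_self _).trans hc') (sq_nonneg _)
  have hcross : 2 * (c - b) * inner ℝ u u' ≤ Q * X * (c * ‖u‖ ^ 2 + ‖u'‖ ^ 2) :=
    calc 2 * (c - b) * inner ℝ u u' ≤ 2 * (|c - b| * |inner ℝ u u'|) := by
          rw [mul_assoc, ← abs_mul]; linarith [le_abs_self ((c - b) * inner ℝ u u')]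
      _ ≤ 2 * (Q * X ^ 2 * (‖u‖ * ‖u'‖)) := by gcongr; exact abs_real_inner_le_norm u u'
      _ = Q * X * (2 * (X * ‖u‖) * ‖u'‖) := by ring
      _ ≤ Q * X * ((X * ‖u‖) ^ 2 + ‖u'‖ ^ 2) := by gcongr; exact two_mul_le_add_sq _ _
      _ ≤ Q * X * (c * ‖u‖ ^ 2 + ‖u'‖ ^ 2) := by
          gcongr; rw [mul_pow]; exact mul_le_mul_of_nonneg_right hcX (sq_nonneg _)
  have hforce : 2 * inner ℝ u' g ≤ X * (c * ‖u‖ ^ 2 + ‖u'‖ ^ 2) + F ^ 2 :=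
    calc 2 * inner ℝ u' g ≤ 2 * ‖u'‖ * F := by
          have := (real_inner_le_norm u' g).trans (mul_le_mul_of_nonneg_left hg (norm_nonneg u'))
          linarith
      _ ≤ ‖u'‖ ^ 2 + F ^ 2 := two_mul_le_add_sq _ F
      _ ≤ X * (c * ‖u‖ ^ 2 + ‖u'‖ ^ 2) + F ^ 2 := by
          nlinarith [mul_nonneg hc0 (sq_nonneg ‖u‖), sq_nonneg ‖u'‖]
  nlinarith [mul_nonneg (mul_nonneg hP (zero_le_one.trans hX)) (sq_nonneg ‖u'‖)]

theorem hasDerivAt_waveEnergy {c : ℝ → ℝ} {v v' : ℝ → E} {c'₀ : ℝ} {v''₀ : E} {t : ℝ}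
    (hc : HasDerivAt c c'₀ t) (hv : HasDerivAt v (v' t) t) (hv' : HasDerivAt v' v''₀ t) :
    HasDerivAt (waveEnergy c v v')
      (c'₀ * ‖v t‖ ^ 2 + c t * (2 * inner ℝ (v t) (v' t)) + 2 * inner ℝ (v' t) v''₀) t :=
  (hc.mul hv.norm_sq).add hv'.norm_sq

theorem waveEnergy_le_of_approx_coeff {a₀ T X P Q F : ℝ} {c c' b : ℝ → ℝ} {f v v' v'' : ℝ → E}
    (hX : 1 ≤ X) (hP : 0 ≤ P) (hQ : 0 ≤ Q)
    (hc : ∀ t ∈ Icc a₀ T, HasDerivAt c (c' t) t) (hcX : ∀ t ∈ Icc a₀ T, X ^ 2 ≤ c t)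
    (hc' : ∀ t ∈ Icc a₀ T, |c' t| ≤ P * X * c t)
    (hcb : ∀ t ∈ Icc a₀ T, |c t - b t| ≤ Q * X ^ 2)
    (hv : ∀ t ∈ Icc a₀ T, HasDerivAt v (v' t) t) (hv' : ∀ t ∈ Icc a₀ T, HasDerivAt v' (v'' t) t)
    (hode : ∀ t ∈ Icc a₀ T, v'' t + b t • v t = f t) (hf : ∀ t ∈ Icc a₀ T, ‖f t‖ ≤ F) :
    ∀ t ∈ Icc a₀ T, waveEnergy c v v' t ≤
      (waveEnergy c v v' a₀ + F ^ 2) * exp ((P + Q + 1) * X * (t - a₀)) := by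
  have hL : 1 ≤ (P + Q + 1) * X := by nlinarith
  suffices h : ∀ t ∈ Icc a₀ T, waveEnergy c v v' t + F ^ 2 ≤
      (waveEnergy c v v' a₀ + F ^ 2) * exp ((P + Q + 1) * X * (t - a₀)) from
    fun t ht => (le_add_of_nonneg_right (sq_nonneg F)).trans (h t ht)
  refine le_mul_exp_of_hasDerivAt_le_mul
    (fun t ht => (hasDerivAt_waveEnergy (hc t ht) (hv t ht) (hv' t ht)).add_const _) ?_
  intro t ht
  replace ht := Ico_subset_Icc_self ht
  have hv'' : v'' t = f t - b t • v t := eq_sub_of_add_eq (hode t ht)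
  have hderiv := waveEnergy_deriv_le (u := v t) (u' := v' t) hX hP hQ (hcX t ht) (hc' t ht)
    (hcb t ht) (hf t ht)
  rw [hv'', inner_sub_right, real_inner_smul_right, real_inner_comm (v t)]
  simp only [waveEnergy] at hderiv ⊢
  nlinarith [mul_nonneg (sub_nonneg.2 hL) (sq_nonneg F)]

end Energy

theorem mul_rpow_neg_rpow_le {X lam p : ℝ} (hX : 0 < X) (hlam : lam ≤ X ^ p) (q e : ℝ) :
    lam * (X ^ (-q)) ^ e ≤ X ^ (p - q * e) := by
  rw [← rpow_mul hX.le, sub_eq_add_neg, rpow_add hX, neg_mul]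
  exact mul_le_mul_of_nonneg_right hlam (rpow_nonneg hX.le _)

theorem gevrey_weight_bounds {s lam : ℝ} (hs : 1 ≤ s) (hlam : 0 ≤ lam) :
    1 ≤ (1 + lam) ^ (1 / (2 * s)) ∧ ((1 + lam) ^ (1 / (2 * s))) ^ (2 * s) = 1 + lam ∧
      ((1 + lam) ^ (1 / (2 * s))) ^ 2 ≤ 1 + lam ∧
      1 + lam ≤ exp (2 * s * (1 + lam) ^ (1 / (2 * s))) := by
  have hb : 0 < 1 + lam := by linarith
  have hp : 0 < 1 / (2 * s) := by positivity
  have hX : 1 ≤ (1 + lam) ^ (1 / (2 * s)) := one_le_rpow (by linarith) hp.le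
  have hXs : ((1 + lam) ^ (1 / (2 * s))) ^ (2 * s) = 1 + lam := by
    rw [← rpow_mul hb.le, one_div_mul_cancel (by positivity), rpow_one]
  refine ⟨hX, hXs, ?_, ?_⟩
  · rw [← rpow_natCast]
    nth_rw 2 [← hXs]
    exact rpow_le_rpow_of_exponent_le hX (by push_cast; linarith)
  · rw [← log_le_iff_le_exp hb]
    convert log_le_rpow_div hb.le hp using 1
    field_simp

theorem gevrey_scale_bounds {α s X lam : ℝ} (hα : 0 < α) (hs : s ≤ 1 + α / 2) (hX : 1 ≤ X)
    (hlam : lam ≤ X ^ (2 * s)) :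
    lam * (X ^ (-(2 * (s - 1) / α))) ^ α ≤ X ^ 2 ∧
      lam * (X ^ (-(2 * (s - 1) / α))) ^ (α - 1) ≤ X ^ 3 := by
  have hX0 : 0 < X := zero_lt_one.trans_le hX
  constructor
  · convert mul_rpow_neg_rpow_le hX0 hlam _ α using 1
    rw [div_mul_cancel₀ _ hα.ne', show 2 * s - 2 * (s - 1) = (2 : ℕ) by norm_num; ring,
      rpow_natCast]
  · refine (mul_rpow_neg_rpow_le hX0 hlam _ (α - 1)).trans ?_
    rw [← rpow_natCast]
    refine rpow_le_rpow_of_exponent_le hX ?_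
    have hδ : 2 * (s - 1) / α ≤ 1 := by rw [div_le_one hα]; linarith
    have hexp : 2 * s - 2 * (s - 1) / α * (α - 1) = 2 + 2 * (s - 1) / α := by
      field_simp; ring
    rw [hexp]
    push_cast
    linarith

section HolderCoefficient

variable {a : ℝ → ℝ} {M α lam ε X : ℝ}

theorem abs_deriv_regularized_coeff_le (hM : 0 ≤ M) (hlam : 0 ≤ lam) (hε : 0 < ε) (hX : 1 ≤ X)
    (hHol : ∀ t u, |a t - a u| ≤ M * |t - u| ^ α) (hεα : lam * ε ^ (α - 1) ≤ X ^ 3)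
    (ha : ∀ t, 0 ≤ a t) (t : ℝ) :
    |lam * (ε⁻¹ * (a (t + ε) - a t))| ≤ M * X * (lam * slidingAverage a ε t + X ^ 2) := by
  have hslope : |ε⁻¹ * (a (t + ε) - a t)| ≤ M * ε ^ (α - 1) := by
    have h := hHol (t + ε) t
    rw [add_sub_cancel_left, abs_of_pos hε] at h
    rw [abs_mul, abs_inv, abs_of_pos hε, rpow_sub_one hε.ne', inv_mul_le_iff₀ hε]
    rwa [mul_div_assoc', mul_div_cancel₀ _ hε.ne']
  calc |lam * (ε⁻¹ * (a (t + ε) - a t))| ≤ lam * (M * ε ^ (α - 1)) := by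
        rw [abs_mul, abs_of_nonneg hlam]; gcongr
    _ = M * (lam * ε ^ (α - 1)) := by ring
    _ ≤ M * X ^ 3 := by gcongr
    _ ≤ M * X * (lam * slidingAverage a ε t + X ^ 2) := by
        have := mul_nonneg hlam (slidingAverage_nonneg hε.le ha t)
        rw [mul_assoc]; gcongr; nlinarith

theorem abs_regularized_coeff_sub_le (hM : 0 ≤ M) (hlam : 0 ≤ lam) (hε : 0 < ε) (hX : 1 ≤ X)
    (hα : 0 < α) (hHol : ∀ t u, |a t - a u| ≤ M * |t - u| ^ α) (hεα : lam * ε ^ α ≤ X ^ 2)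
    {q : ℝ → ℝ} {Mq t : ℝ} (hq : |q t| ≤ Mq) :
    |lam * slidingAverage a ε t + X ^ 2 - (lam * a t + q t)| ≤ (M + 1 + Mq) * X ^ 2 := by
  have ha : Continuous a :=
    continuous_of_dist_le_mul_rpow hα (by simpa only [Real.dist_eq] using hHol)
  have havg : lam * |slidingAverage a ε t - a t| ≤ M * X ^ 2 :=
    calc lam * |slidingAverage a ε t - a t| ≤ lam * (M * ε ^ α) := by
          gcongr; exact abs_slidingAverage_sub_le hε ha hM hα.le hHol t
      _ = M * (lam * ε ^ α) := by ring
      _ ≤ M * X ^ 2 := by gcongr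
  have hX2 : 1 ≤ X ^ 2 := one_le_pow₀ hX
  calc |lam * slidingAverage a ε t + X ^ 2 - (lam * a t + q t)|
      = |lam * (slidingAverage a ε t - a t) + X ^ 2 - q t| := by ring_nf
    _ ≤ lam * |slidingAverage a ε t - a t| + X ^ 2 + |q t| := by
        have hA := abs_mul lam (slidingAverage a ε t - a t)
        rw [abs_of_nonneg hlam] at hA
        rw [abs_le, ← hA]
        constructor <;> linarith [neg_abs_le (lam * (slidingAverage a ε t - a t)),
          le_abs_self (lam * (slidingAverage a ε t - a t)), neg_abs_le (q t), le_abs_self (q t),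
          sq_nonneg X]
    _ ≤ (M + 1 + Mq) * X ^ 2 := by nlinarith [abs_nonneg (q t)]

end HolderCoefficient

theorem holder_wave_energy_estimate {E : Type*} [NormedAddCommGroup E] [InnerProductSpace ℝ E]
    {T M α Ma Mq lam X ε F : ℝ} {a q : ℝ → ℝ} {f v v' v'' : ℝ → E}
    (hα : 0 < α) (hM : 0 ≤ M) (hMq : 0 ≤ Mq) (hlam : 0 ≤ lam) (hX : 1 ≤ X)
    (hX2 : X ^ 2 ≤ 1 + lam) (hε : 0 < ε) (hεα : lam * ε ^ α ≤ X ^ 2)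
    (hεα' : lam * ε ^ (α - 1) ≤ X ^ 3)
    (hHol : ∀ t u, |a t - a u| ≤ M * |t - u| ^ α) (ha_bd : ∀ t, |a t| ≤ Ma)
    (ha_nonneg : ∀ t, 0 ≤ a t) (hq_bd : ∀ t ∈ Icc 0 T, |q t| ≤ Mq)
    (hv : ∀ t ∈ Icc 0 T, HasDerivAt v (v' t) t) (hv' : ∀ t ∈ Icc 0 T, HasDerivAt v' (v'' t) t)
    (hode : ∀ t ∈ Icc 0 T, v'' t + (lam * a t + q t) • v t = f t)
    (hf : ∀ t ∈ Icc 0 T, ‖f t‖ ≤ F) :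
    ∀ t ∈ Icc 0 T, (1 + lam) * ‖v t‖ ^ 2 + ‖v' t‖ ^ 2 ≤
      (Ma + 1 + F ^ 2) * (1 + lam) * exp ((2 * M + Mq + 2) * X * T) *
        ((1 + lam) * ‖v 0‖ ^ 2 + ‖v' 0‖ ^ 2 + 1) := by
  have ha : Continuous a :=
    continuous_of_dist_le_mul_rpow hα (by simpa only [Real.dist_eq] using hHol)
  set c : ℝ → ℝ := fun t => lam * slidingAverage a ε t + X ^ 2 with hc
  have hcX : ∀ t, X ^ 2 ≤ c t := fun t =>
    le_add_of_nonneg_left (mul_nonneg hlam (slidingAverage_nonneg hε.le ha_nonneg t))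
  have hE := waveEnergy_le_of_approx_coeff (a₀ := 0) (c := c)
    (b := fun t => lam * a t + q t) (P := M) (Q := M + 1 + Mq) hX hM (by positivity)
    (fun t _ => ((hasDerivAt_slidingAverage ha t).const_mul lam).add_const _)
    (fun t _ => hcX t)
    (fun t _ => abs_deriv_regularized_coeff_le hM hlam hε hX hHol hεα' ha_nonneg t)
    (fun t ht => abs_regularized_coeff_sub_le hM hlam hε hX hα hHol hεα (hq_bd t ht))
    hv hv' hode hf
  simp only [show M + (M + 1 + Mq) + 1 = 2 * M + Mq + 2 by ring, sub_zero] at hE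
  intro t ht
  have hMa : 0 ≤ Ma := (abs_nonneg _).trans (ha_bd 0)
  have hc0 : c 0 ≤ (Ma + 1) * (1 + lam) := by
    have := (le_abs_self _).trans (abs_slidingAverage_le hε ha_bd 0)
    simp only [hc]; nlinarith
  have hG0 : waveEnergy c v v' 0 ≤ (Ma + 1) * ((1 + lam) * ‖v 0‖ ^ 2 + ‖v' 0‖ ^ 2) := by
    simp only [waveEnergy]; nlinarith [sq_nonneg ‖v 0‖, sq_nonneg ‖v' 0‖]
  have hGt : (1 + lam) * ‖v t‖ ^ 2 + ‖v' t‖ ^ 2 ≤ (1 + lam) * waveEnergy c v v' t := by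
    have h1 : 0 ≤ c t - 1 := sub_nonneg.2 ((one_le_pow₀ hX).trans (hcX t))
    simp only [waveEnergy]
    nlinarith [mul_nonneg (mul_nonneg (by linarith : (0 : ℝ) ≤ 1 + lam) h1) (sq_nonneg ‖v t‖),
      mul_nonneg hlam (sq_nonneg ‖v' t‖)]
  have hEt : waveEnergy c v v' t ≤ (waveEnergy c v v' 0 + F ^ 2) *
      exp ((2 * M + Mq + 2) * X * T) := by
    refine (hE t ht).trans (mul_le_mul_of_nonneg_left ?_ ?_)
    · exact exp_le_exp.2 (mul_le_mul_of_nonneg_left ht.2 (by positivity))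
    · exact add_nonneg (add_nonneg (mul_nonneg ((sq_nonneg X).trans (hcX 0)) (sq_nonneg _))
        (sq_nonneg _)) (sq_nonneg F)
  calc (1 + lam) * ‖v t‖ ^ 2 + ‖v' t‖ ^ 2 ≤ (1 + lam) * waveEnergy c v v' t := hGt
    _ ≤ (1 + lam) * ((waveEnergy c v v' 0 + F ^ 2) * exp ((2 * M + Mq + 2) * X * T)) := by
        gcongr
    _ ≤ _ := by
        have hG : 0 ≤ (1 + lam) * ‖v 0‖ ^ 2 + ‖v' 0‖ ^ 2 := by positivity
        have h : waveEnergy c v v' 0 + F ^ 2 ≤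
            (Ma + 1 + F ^ 2) * ((1 + lam) * ‖v 0‖ ^ 2 + ‖v' 0‖ ^ 2 + 1) := by
          nlinarith [mul_nonneg (sq_nonneg F) hG]
        have := mul_le_mul_of_nonneg_left h
          (mul_nonneg (by linarith : (0 : ℝ) ≤ 1 + lam) (exp_nonneg ((2 * M + Mq + 2) * X * T)))
        linarith

theorem gevrey_energy_estimate_holder_degenerate_general
    (T α M Ma Mq s c₀ A : ℝ) (hT : 0 < T) (hα0 : 0 < α)
    (a q : ℝ → ℝ)
    (hHol : ∀ t u : ℝ, |a t - a u| ≤ M * |t - u| ^ α)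
    (ha_bd : ∀ t, |a t| ≤ Ma)
    (ha_nonneg : ∀ t, 0 ≤ a t)
    (hq_bd : ∀ t ∈ Icc (0:ℝ) T, |q t| ≤ Mq)
    (hs1 : 1 ≤ s) (hs2 : s < 1 + α / 2)
    (hc₀ : 0 < c₀) (hA : 0 < A) :
    ∃ C > 0, ∃ K > 0, ∀ lam : ℝ, 0 ≤ lam → ∀ f v v' v'' : ℝ → ℂ,
      ContinuousOn f (Icc (0:ℝ) T) →
      (∀ t ∈ Icc (0:ℝ) T, ‖f t‖ ≤ c₀ * Real.exp (-A * (1 + lam) ^ (1 / (2 * s)))) →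
      (∀ t ∈ Icc (0:ℝ) T, HasDerivAt v (v' t) t) →
      (∀ t ∈ Icc (0:ℝ) T, HasDerivAt v' (v'' t) t) →
      ContinuousOn v'' (Icc (0:ℝ) T) →
      (∀ t ∈ Icc (0:ℝ) T, v'' t + (lam : ℂ) * (a t : ℂ) * v t + (q t : ℂ) * v t = f t) →
      ∀ t ∈ Icc (0:ℝ) T,
        (1 + lam) * ‖v t‖ ^ 2 + ‖v' t‖ ^ 2 ≤
          C * Real.exp (K * (1 + lam) ^ (1 / (2 * s))) *
            ((1 + lam) * ‖v 0‖ ^ 2 + ‖v' 0‖ ^ 2 + 1) := by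
  have hs : 0 < s := zero_lt_one.trans_le hs1
  have hM : 0 ≤ M := by simpa using (abs_nonneg _).trans (hHol 0 1)
  have hMa : 0 ≤ Ma := (abs_nonneg _).trans (ha_bd 0)
  have hMq : 0 ≤ Mq := (abs_nonneg _).trans (hq_bd 0 ⟨le_rfl, hT.le⟩)
  refine ⟨Ma + 1 + c₀ ^ 2, by positivity, (2 * M + Mq + 2) * T + 2 * s, by positivity, ?_⟩
  intro lam hlam f v v' v'' _ hfb hv hv' _ hode t ht
  obtain ⟨hX, hXs, hX2, hexp⟩ := gevrey_weight_bounds hs1 hlam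
  set X := (1 + lam) ^ (1 / (2 * s))
  obtain ⟨hεα, hεα'⟩ := gevrey_scale_bounds hα0 hs2.le hX (by linarith : lam ≤ X ^ (2 * s))
  have hf : ∀ t ∈ Icc 0 T, ‖f t‖ ≤ c₀ := fun t ht => (hfb t ht).trans
    (mul_le_of_le_one_right hc₀.le (exp_le_one_iff.2 (by nlinarith)))
  calc (1 + lam) * ‖v t‖ ^ 2 + ‖v' t‖ ^ 2
      ≤ (Ma + 1 + c₀ ^ 2) * (1 + lam) * exp ((2 * M + Mq + 2) * X * T) *
          ((1 + lam) * ‖v 0‖ ^ 2 + ‖v' 0‖ ^ 2 + 1) :=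
        holder_wave_energy_estimate hα0 hM hMq hlam hX hX2
          (rpow_pos_of_pos (zero_lt_one.trans_le hX) _) hεα hεα' hHol ha_bd ha_nonneg hq_bd hv hv'
          (fun t ht => by rw [Complex.real_smul, ← hode t ht]; push_cast; ring) hf t ht
    _ ≤ (Ma + 1 + c₀ ^ 2) * exp (2 * s * X) * exp ((2 * M + Mq + 2) * X * T) *
          ((1 + lam) * ‖v 0‖ ^ 2 + ‖v' 0‖ ^ 2 + 1) := by gcongr
    _ = _ := by rw [mul_assoc (Ma + 1 + c₀ ^ 2) (exp _) (exp _), ← exp_add]; ring_nf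

/-- Case 4 Fourier-mode energy estimate: nonnegative Hölder speed of order `α ∈ (0,2)`,
yielding Gevrey well-posedness for orders `1 ≤ s < 1 + α/2`. -/
theorem gevrey_energy_estimate_holder_degenerate
    (T α M Ma Mq s c₀ A : ℝ) (hT : 0 < T) (hα0 : 0 < α) (hα2 : α < 2)
    (a q : ℝ → ℝ)
    (hHol : ∀ t u : ℝ, |a t - a u| ≤ M * |t - u| ^ α)
    (ha_bd : ∀ t, |a t| ≤ Ma)
    (ha_nonneg : ∀ t, 0 ≤ a t)
    (hq_bd : ∀ t ∈ Icc (0:ℝ) T, |q t| ≤ Mq)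
    (hs1 : 1 ≤ s) (hs2 : s < 1 + α / 2)
    (hc₀ : 0 < c₀) (hA : 0 < A) :
    ∃ C > 0, ∃ K > 0, ∀ lam : ℝ, 0 ≤ lam → ∀ f v v' v'' : ℝ → ℂ,
      ContinuousOn f (Icc (0:ℝ) T) →
      (∀ t ∈ Icc (0:ℝ) T, ‖f t‖ ≤ c₀ * Real.exp (-A * (1 + lam) ^ (1 / (2 * s)))) →
      (∀ t ∈ Icc (0:ℝ) T, HasDerivAt v (v' t) t) →
      (∀ t ∈ Icc (0:ℝ) T, HasDerivAt v' (v'' t) t) →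
      ContinuousOn v'' (Icc (0:ℝ) T) →
      (∀ t ∈ Icc (0:ℝ) T, v'' t + (lam : ℂ) * (a t : ℂ) * v t + (q t : ℂ) * v t = f t) →
      ∀ t ∈ Icc (0:ℝ) T,
        (1 + lam) * ‖v t‖ ^ 2 + ‖v' t‖ ^ 2 ≤
          C * Real.exp (K * (1 + lam) ^ (1 / (2 * s))) *
            ((1 + lam) * ‖v 0‖ ^ 2 + ‖v' 0‖ ^ 2 + 1) :=
  gevrey_energy_estimate_holder_degenerate_general T α M Ma Mq s c₀ A hT hα0 a q hHol ha_bd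
    ha_nonneg hq_bd hs1 hs2 hc₀ hA
end

section
/- Let T, ã₀, c₁, c₂ > 0 and L₁, L₂ ∈ ℕ, and set L = max(L₁+1, L₂). Then there exist constants C, K > 0, depending only on T, ã₀, c₁ and c₂, such that the following holds: for every ω ∈ (0,1], every differentiable a:[0,T]→ℝ with ã₀ ≤ a(t) ≤ c₁ ω^{−L₁} and |a'(t)| ≤ c₁ ω^{−L₁−1} for all t, every q:[0,T]→ℝ with |q(t)| ≤ c₂ ω^{−L₂} for all t, every λ ≥ 0, every continuous f:[0,T]→ℂ, and every twice continuously differentiable v:[0,T]→ℂ satisfying v''(t) + λ a(t) v(t) + q(t) v(t) = f(t) on [0,T], one has (1+λ)|v(t)|² + |v'(t)|² ≤ C e^{K ω^{−L}} ( (1+λ)|v(0)|² + |v'(0)|² + ∫₀ᵀ |f(τ)|² dτ ) for all t ∈ [0,T]. -/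
/-!
The energy `E = (1 + λ a) ‖v‖² + ‖v'‖²` of the mode has derivative
`λ a' ‖v‖² + 2⟪v, v'⟫ + 2⟪v', f⟫ - 2 q ⟪v, v'⟫`: substituting the equation for `v''` cancels
the terms `λ a ⟪v, v'⟫`, which carry no bound uniform in `λ`. With `W = ω^{-L} ≥ 1` the
remaining terms are at most `(c₁/ã₀ + 2 + c₂) W E + ‖f‖²`, where `λ a' ‖v‖²` is controlled by
`λ a ‖v‖²` through `a ≥ ã₀`. Grönwall's inequality for `E(t) + ∫ₜᵀ ‖f‖²` then bounds `E(t)` by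
`(E(0) + ∫₀ᵀ ‖f‖²) e^{(c₁/ã₀ + 2 + c₂) W T}`, and it remains to compare the weights `1 + λ a` and
`1 + λ` (using `ã₀ ≤ a ≤ c₁ W`) and to absorb the resulting factor `W` into `e^W`.
-/

open Set MeasureTheory

/-- The parameterised Fourier-mode energy estimate with constants `C`, `K`, for coefficients
satisfying the moderateness bounds of order `ω^{-L₁}`, `ω^{-L₁-1}`, `ω^{-L₂}`; the energy
grows at most like `C e^{K ω^{-L}}` with `L = max(L₁+1, L₂)`. -/
def EnergyEstimateWith (T a₀ c₁ c₂ : ℝ) (L₁ L₂ : ℕ) (C K : ℝ) : Prop :=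
  ∀ ω ∈ Set.Ioc (0:ℝ) 1, ∀ a a' q : ℝ → ℝ,
    (∀ t ∈ Set.Icc (0:ℝ) T, HasDerivAt a (a' t) t) →
    (∀ t ∈ Set.Icc (0:ℝ) T, a₀ ≤ a t ∧ a t ≤ c₁ * ω ^ (-(L₁ : ℤ))) →
    (∀ t ∈ Set.Icc (0:ℝ) T, |a' t| ≤ c₁ * ω ^ (-(L₁ : ℤ) - 1)) →
    (∀ t ∈ Set.Icc (0:ℝ) T, |q t| ≤ c₂ * ω ^ (-(L₂ : ℤ))) →
    ∀ lam : ℝ, 0 ≤ lam → ∀ f v v' v'' : ℝ → ℂ,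
      ContinuousOn f (Set.Icc (0:ℝ) T) →
      (∀ t ∈ Set.Icc (0:ℝ) T, HasDerivAt v (v' t) t) →
      (∀ t ∈ Set.Icc (0:ℝ) T, HasDerivAt v' (v'' t) t) →
      ContinuousOn v'' (Set.Icc (0:ℝ) T) →
      (∀ t ∈ Set.Icc (0:ℝ) T,
        v'' t + (lam : ℂ) * (a t : ℂ) * v t + (q t : ℂ) * v t = f t) →
      ∀ t ∈ Set.Icc (0:ℝ) T,
        (1 + lam) * ‖v t‖ ^ 2 + ‖v' t‖ ^ 2 ≤
          C * Real.exp (K * ω ^ (-((max (L₁ + 1) L₂ : ℕ) : ℤ))) *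
            ((1 + lam) * ‖v 0‖ ^ 2 + ‖v' 0‖ ^ 2 + ∫ τ in (0:ℝ)..T, ‖f τ‖ ^ 2)

theorem le_mul_exp_of_hasDerivAt_le_mul_add {E E' g : ℝ → ℝ} {k a b : ℝ} (hk : 0 ≤ k)
    (hE : ∀ t ∈ Icc a b, HasDerivAt E (E' t) t) (hg : ContinuousOn g (Icc a b))
    (hg₀ : ∀ t ∈ Icc a b, 0 ≤ g t) (bound : ∀ t ∈ Ico a b, E' t ≤ k * E t + g t) :
    ∀ t ∈ Icc a b, E t ≤ (E a + ∫ s in a..b, g s) * Real.exp (k * (t - a)) := by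
  intro t ht
  have hab : a ≤ b := ht.1.trans ht.2
  -- `g` extended continuously to `ℝ`, so that its integral has a derivative everywhere
  set g' : ℝ → ℝ := fun s => g (projIcc a b hab s)
  have hg'c : Continuous g' :=
    hg.comp_continuous (continuous_subtype_val.comp continuous_projIcc) fun s =>
      (projIcc a b hab s).2
  have hg'g : EqOn g' g (Icc a b) := fun s hs => by simp only [g', projIcc_of_mem hab hs]
  have hg'₀ (s : ℝ) : 0 ≤ g' s := hg₀ _ (projIcc a b hab s).2
  set H : ℝ → ℝ := fun s => E s + ∫ u in s..b, g' u
  have hH : ∀ s ∈ Icc a b, HasDerivAt H (E' s - g s) s := fun s hs => by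
    have := (hE s hs).add (intervalIntegral.integral_hasDerivAt_left (hg'c.intervalIntegrable s b)
      hg'c.stronglyMeasurable.stronglyMeasurableAtFilter hg'c.continuousAt)
    rwa [hg'g hs, ← sub_eq_add_neg] at this
  have hEH (s : ℝ) (hs : s ≤ b) : E s ≤ H s :=
    le_add_of_nonneg_right (intervalIntegral.integral_nonneg hs fun u _ => hg'₀ u)
  have gronwall := le_gronwallBound_of_liminf_deriv_right_le (δ := H a) (K := k) (ε := 0)
    (fun s hs => (hH s hs).continuousAt.continuousWithinAt)
    (fun s hs _ hr => (hH s (Ico_subset_Icc_self hs)).hasDerivWithinAt.liminf_right_slope_le hr)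
    le_rfl (fun s hs => by linarith [bound s hs, mul_le_mul_of_nonneg_left (hEH s hs.2.le) hk])
    t ht
  rw [gronwallBound_ε0] at gronwall
  have hHa : H a = E a + ∫ s in a..b, g s :=
    congrArg (E a + ·) <|
      intervalIntegral.integral_congr fun s hs => hg'g (by rwa [uIcc_of_le hab] at hs)
  exact hHa ▸ (hEH t ht.2).trans gronwall

lemma one_add_le_max_inv_mul_one_add_mul {a₀ a lam : ℝ} (ha₀ : 0 < a₀) (ha : a₀ ≤ a)
    (hlam : 0 ≤ lam) : 1 + lam ≤ max 1 a₀⁻¹ * (1 + lam * a) := by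
  have h₁ : 1 ≤ a₀⁻¹ * a := (one_le_inv_mul₀ ha₀).2 ha
  nlinarith [le_max_left 1 a₀⁻¹, mul_le_mul_of_nonneg_right (le_max_right 1 a₀⁻¹) (ha₀.le.trans ha)]

lemma one_add_mul_le_mul_one_add {a lam M : ℝ} (hlam : 0 ≤ lam) (hM : 1 ≤ M) (ha : a ≤ M) :
    1 + lam * a ≤ M * (1 + lam) := by
  nlinarith

section ModeEnergy

variable {F : Type*} [NormedAddCommGroup F]

def modeEnergy (m : ℝ) (x y : F) : ℝ := m * ‖x‖ ^ 2 + ‖y‖ ^ 2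

lemma modeEnergy_nonneg {m : ℝ} (x y : F) (hm : 0 ≤ m) : 0 ≤ modeEnergy m x y := by
  unfold modeEnergy
  positivity

lemma modeEnergy_le_mul {m m' c : ℝ} (x y : F) (hc : 1 ≤ c) (hm : m ≤ c * m') :
    modeEnergy m x y ≤ c * modeEnergy m' x y := by
  have hx := mul_le_mul_of_nonneg_right hm (sq_nonneg ‖x‖)
  have hy := mul_le_mul_of_nonneg_right hc (sq_nonneg ‖y‖)
  unfold modeEnergy
  linarith

variable [InnerProductSpace ℝ F]

lemma hasDerivAt_modeEnergy {m : ℝ → ℝ} {m' t : ℝ} {v v' : ℝ → F} {w w' : F}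
    (hm : HasDerivAt m m' t) (hv : HasDerivAt v w t) (hv' : HasDerivAt v' w' t) :
    HasDerivAt (fun s => modeEnergy (m s) (v s) (v' s))
      (m' * ‖v t‖ ^ 2 + m t * (2 * inner ℝ (v t) w) + 2 * inner ℝ (v' t) w') t :=
  ((hm.fun_mul hv.norm_sq).fun_add hv'.norm_sq).congr_deriv (by ring)

/-- The left side is the derivative of the mode energy (`hasDerivAt_modeEnergy`) at an instant
where `x = v`, `y = v'`, `z = f`, with `v''` eliminated through the equation. -/
lemma modeEnergy_deriv_le {a₀ c₁ c₂ W lam a a' q : ℝ} (x y z : F) (ha₀ : 0 < a₀)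
    (hc₁ : 0 ≤ c₁) (hc₂ : 0 ≤ c₂) (hW : 1 ≤ W) (hlam : 0 ≤ lam) (ha : a₀ ≤ a)
    (ha' : |a'| ≤ c₁ * W) (hq : |q| ≤ c₂ * W) :
    lam * a' * ‖x‖ ^ 2 + (1 + lam * a) * (2 * inner ℝ x y)
        + 2 * inner ℝ y (z - (lam * a) • x - q • x)
      ≤ (c₁ / a₀ + 2 + c₂) * W * modeEnergy (1 + lam * a) x y + ‖z‖ ^ 2 := by
  set E := modeEnergy (1 + lam * a) x y
  have hW₀ : 0 ≤ W := zero_le_one.trans hW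
  have hax : 0 ≤ lam * a * ‖x‖ ^ 2 := by have := ha₀.le.trans ha; positivity
  have hE : ‖x‖ ^ 2 + ‖y‖ ^ 2 ≤ E := by simp only [E, modeEnergy]; linarith
  have hxy : |2 * inner ℝ x y| ≤ ‖x‖ ^ 2 + ‖y‖ ^ 2 := by
    rw [abs_mul, abs_two]
    nlinarith [abs_real_inner_le_norm x y, two_mul_le_add_sq ‖x‖ ‖y‖]
  have hyz : 2 * inner ℝ y z ≤ ‖y‖ ^ 2 + ‖z‖ ^ 2 := by
    nlinarith [real_inner_le_norm y z, two_mul_le_add_sq ‖y‖ ‖z‖]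
  -- `|a'| ≤ c₁ W ≤ (c₁ / a₀) W a` turns the growth of `a` into a multiple of `λ a ‖x‖² ≤ E`
  have ha'E : lam * a' * ‖x‖ ^ 2 ≤ c₁ / a₀ * W * E := by
    have hc : 0 ≤ c₁ / a₀ * W := mul_nonneg (div_nonneg hc₁ ha₀.le) hW₀
    have h₁ : a' ≤ c₁ / a₀ * W * a :=
      calc a' ≤ c₁ * W := (le_abs_self a').trans ha'
        _ = c₁ / a₀ * W * a₀ := by field_simp
        _ ≤ c₁ / a₀ * W * a := mul_le_mul_of_nonneg_left ha hc
    have hE' : lam * a * ‖x‖ ^ 2 ≤ E := by simp only [E, modeEnergy]; nlinarith [sq_nonneg ‖y‖]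
    nlinarith [mul_le_mul_of_nonneg_left hE' hc,
      mul_le_mul_of_nonneg_left h₁ (by positivity : 0 ≤ lam * ‖x‖ ^ 2)]
  have hqE : -(q * (2 * inner ℝ x y)) ≤ c₂ * W * E :=
    calc -(q * (2 * inner ℝ x y)) ≤ |q| * |2 * inner ℝ x y| := by
          rw [← abs_mul]; exact neg_le_abs _
      _ ≤ c₂ * W * E := mul_le_mul hq (hxy.trans hE) (abs_nonneg _) (mul_nonneg hc₂ hW₀)
  have hWE : E ≤ W * E := le_mul_of_one_le_left (hE.trans' (by positivity)) hW
  simp only [inner_sub_right, inner_smul_right, real_inner_comm x y]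
  nlinarith [le_abs_self (2 * inner ℝ x y)]

theorem modeEnergy_le_of_ode {T a₀ c₁ c₂ W lam : ℝ} {a a' q : ℝ → ℝ} {f v v' v'' : ℝ → F}
    (ha₀ : 0 < a₀) (hc₁ : 0 ≤ c₁) (hc₂ : 0 ≤ c₂) (hW : 1 ≤ W) (hlam : 0 ≤ lam)
    (hda : ∀ t ∈ Icc 0 T, HasDerivAt a (a' t) t) (ha : ∀ t ∈ Icc 0 T, a₀ ≤ a t)
    (ha' : ∀ t ∈ Icc 0 T, |a' t| ≤ c₁ * W) (hq : ∀ t ∈ Icc 0 T, |q t| ≤ c₂ * W)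
    (hf : ContinuousOn f (Icc 0 T)) (hv : ∀ t ∈ Icc 0 T, HasDerivAt v (v' t) t)
    (hv' : ∀ t ∈ Icc 0 T, HasDerivAt v' (v'' t) t)
    (hode : ∀ t ∈ Icc 0 T, v'' t = f t - (lam * a t) • v t - q t • v t) {t : ℝ}
    (ht : t ∈ Icc 0 T) :
    modeEnergy (1 + lam * a t) (v t) (v' t) ≤
      (modeEnergy (1 + lam * a 0) (v 0) (v' 0) + ∫ s in 0..T, ‖f s‖ ^ 2) *
        Real.exp ((c₁ / a₀ + 2 + c₂) * W * t) := by
  have gronwall := le_mul_exp_of_hasDerivAt_le_mul_add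
    (E := fun s => modeEnergy (1 + lam * a s) (v s) (v' s)) (g := fun s => ‖f s‖ ^ 2)
    (k := (c₁ / a₀ + 2 + c₂) * W) (by positivity)
    (fun s hs =>
      hasDerivAt_modeEnergy (((hda s hs).const_mul lam).const_add 1) (hv s hs) (hv' s hs))
    (hf.norm.pow 2) (fun _ _ => by positivity)
    (fun s hs => by
      have hs := Ico_subset_Icc_self hs
      rw [hode s hs]
      exact modeEnergy_deriv_le _ _ _ ha₀ hc₁ hc₂ hW hlam (ha s hs) (ha' s hs) (hq s hs)) t ht
  simpa using gronwall

theorem modeEnergy_one_add_le_of_ode {T a₀ c₁ c₂ W lam : ℝ} {a a' q : ℝ → ℝ}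
    {f v v' v'' : ℝ → F} (ha₀ : 0 < a₀) (hc₁ : 0 ≤ c₁) (hc₂ : 0 ≤ c₂) (hW : 1 ≤ W)
    (hlam : 0 ≤ lam) (hda : ∀ t ∈ Icc 0 T, HasDerivAt a (a' t) t)
    (ha : ∀ t ∈ Icc 0 T, a₀ ≤ a t ∧ a t ≤ c₁ * W) (ha' : ∀ t ∈ Icc 0 T, |a' t| ≤ c₁ * W)
    (hq : ∀ t ∈ Icc 0 T, |q t| ≤ c₂ * W) (hf : ContinuousOn f (Icc 0 T))
    (hv : ∀ t ∈ Icc 0 T, HasDerivAt v (v' t) t) (hv' : ∀ t ∈ Icc 0 T, HasDerivAt v' (v'' t) t)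
    (hode : ∀ t ∈ Icc 0 T, v'' t = f t - (lam * a t) • v t - q t • v t) {t : ℝ}
    (ht : t ∈ Icc 0 T) :
    modeEnergy (1 + lam) (v t) (v' t) ≤
      max 1 a₀⁻¹ * max 1 c₁ * Real.exp (((c₁ / a₀ + 2 + c₂) * T + 1) * W) *
        (modeEnergy (1 + lam) (v 0) (v' 0) + ∫ s in 0..T, ‖f s‖ ^ 2) := by
  set K₀ := c₁ / a₀ + 2 + c₂
  set G := ∫ s in 0..T, ‖f s‖ ^ 2
  have h0 : (0 : ℝ) ∈ Icc 0 T := ⟨le_rfl, ht.1.trans ht.2⟩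
  have hG : 0 ≤ G := intervalIntegral.integral_nonneg h0.2 fun _ _ => by positivity
  have hE₀ := modeEnergy_nonneg (v 0) (v' 0) (by positivity : 0 ≤ 1 + lam)
  have hMW : 1 ≤ max 1 c₁ * W := one_le_mul_of_one_le_of_one_le (le_max_left _ _) hW
  have henergy := modeEnergy_le_of_ode ha₀ hc₁ hc₂ hW hlam hda (fun s hs => (ha s hs).1) ha' hq
    hf hv hv' hode ht
  have h₁ : modeEnergy (1 + lam) (v t) (v' t) ≤
      max 1 a₀⁻¹ * modeEnergy (1 + lam * a t) (v t) (v' t) :=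
    modeEnergy_le_mul _ _ (le_max_left _ _)
      (one_add_le_max_inv_mul_one_add_mul ha₀ (ha t ht).1 hlam)
  have h₂ : modeEnergy (1 + lam * a 0) (v 0) (v' 0) ≤
      max 1 c₁ * W * modeEnergy (1 + lam) (v 0) (v' 0) :=
    modeEnergy_le_mul _ _ hMW (one_add_mul_le_mul_one_add hlam hMW
      ((ha 0 h0).2.trans (mul_le_mul_of_nonneg_right (le_max_right _ _) (by positivity))))
  have h₃ : W * Real.exp (K₀ * W * t) ≤ Real.exp ((K₀ * T + 1) * W) :=
    calc W * Real.exp (K₀ * W * t) ≤ Real.exp W * Real.exp (K₀ * W * T) := by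
          gcongr
          · linarith [Real.add_one_le_exp W]
          · exact ht.2
      _ = Real.exp ((K₀ * T + 1) * W) := by rw [← Real.exp_add]; ring_nf
  calc modeEnergy (1 + lam) (v t) (v' t)
      ≤ max 1 a₀⁻¹ * ((modeEnergy (1 + lam * a 0) (v 0) (v' 0) + G) * Real.exp (K₀ * W * t)) :=
        h₁.trans (mul_le_mul_of_nonneg_left henergy (by positivity))
    _ ≤ max 1 a₀⁻¹ * (max 1 c₁ * W * (modeEnergy (1 + lam) (v 0) (v' 0) + G) *
          Real.exp (K₀ * W * t)) := by
        gcongr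
        nlinarith
    _ = max 1 a₀⁻¹ * max 1 c₁ * (W * Real.exp (K₀ * W * t)) *
          (modeEnergy (1 + lam) (v 0) (v' 0) + G) := by
        ring
    _ ≤ _ := by gcongr

end ModeEnergy

/-- Existence of very weak solutions, Fourier-mode version: there exist constants `C, K > 0`,
depending only on `T`, `ã₀`, `c₁`, `c₂` (and `L₁`, `L₂`), for which the parameterised
energy estimate holds. -/
theorem very_weak_existence_energy_estimate
    (T a₀ c₁ c₂ : ℝ) (L₁ L₂ : ℕ)
    (hT : 0 < T) (ha₀ : 0 < a₀) (hc₁ : 0 < c₁) (hc₂ : 0 < c₂) :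
    ∃ C > 0, ∃ K > 0, EnergyEstimateWith T a₀ c₁ c₂ L₁ L₂ C K := by
  refine ⟨max 1 a₀⁻¹ * max 1 c₁, by positivity, (c₁ / a₀ + 2 + c₂) * T + 1, by positivity, ?_⟩
  intro ω hω a a' q hda ha ha' hq lam hlam f v v' v'' hf hv hv' _ heq t ht
  set L := max (L₁ + 1) L₂
  have hW : 1 ≤ ω ^ (-(L : ℤ)) := one_le_zpow_of_nonpos₀ hω.1 hω.2 (by omega)
  have hscale {c : ℝ} {n : ℤ} (hc : 0 < c) (hn : -(L : ℤ) ≤ n) : c * ω ^ n ≤ c * ω ^ (-(L : ℤ)) :=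
    mul_le_mul_of_nonneg_left (zpow_le_zpow_right_of_le_one₀ hω.1 hω.2 hn) hc.le
  have hode (s) (hs : s ∈ Icc 0 T) : v'' s = f s - (lam * a s) • v s - q s • v s := by
    simp only [Complex.real_smul]
    push_cast
    linear_combination heq s hs
  exact modeEnergy_one_add_le_of_ode ha₀ hc₁.le hc₂.le hW hlam hda
    (fun s hs => ⟨(ha s hs).1, (ha s hs).2.trans (hscale hc₁ (by omega))⟩)
    (fun s hs => (ha' s hs).trans (hscale hc₁ (by omega)))
    (fun s hs => (hq s hs).trans (hscale hc₂ (by omega))) hf hv hv' hode ht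
end
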